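/- arXiv:1512.01335 — 5 statements merged into one kernel-verified Lean document; each statement's English description precedes it below -/
import Mathlib

section
/- Let U and V be disjoint finite point sets in R^d with |U| = p, |V| = q, 2 ≤ p, q ≤ d, p + q ≥ d + 1, such that all points of U ∪ V together with some additional points form a set in general position (in particular the p+q points of U ∪ V are affinely independent as far as possible: no d+1 on a hyperplane). If the relative interiors of Conv(U) and Conv(V) intersect, then for any disjoint supersets U' ⊇ U and V' ⊇ V with |U'| = |V'| = d, drawn from a common point set in general position in R^d, the relative interiors of Conv(U') and Conv(V') also intersect. -/
/-!
If the relative interiors of `conv U'` and `conv V'` were disjoint, a nonzero linear functional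
`f` would weakly separate the two hulls (separate `0` from the convex set
`relint conv U' - relint conv V'` and pass to closures). A common relative interior point `z` of
`conv U` and `conv V` lies in both `conv U'` and `conv V'`, so `f` attains its maximum over
`conv U` and its minimum over `conv V` at `z`. An extremum of a linear functional at a relative
interior point forces it to be constant, so `f` is constant on the `p + q ≥ d + 1` points of
`U ∪ V`. By general position some `d + 1` of them are affinely independent and span `ℝᵈ`
affinely, whence `f = 0`.
-/
open Set Filter Topology
open scoped Pointwise

section IntrinsicInterior

variable {E : Type*} [NormedAddCommGroup E] [NormedSpace ℝ E] {s : Set E} {y z : E}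

def affineSpanChart (s : Set E) (y : E) : (affineSpan ℝ s).direction →ᵃ[ℝ] E :=
  (affineSpan ℝ s).direction.subtype.toAffineMap + AffineMap.const ℝ _ y

@[simp]
theorem affineSpanChart_apply (v : (affineSpan ℝ s).direction) :
    affineSpanChart s y v = v + y := rfl

theorem continuous_affineSpanChart : Continuous (affineSpanChart s y) :=
  continuous_subtype_val.add continuous_const

theorem intrinsicInterior_eq_image_affineSpanChart (hy : y ∈ s) :
    intrinsicInterior ℝ s =
      affineSpanChart s y '' interior (affineSpanChart s y ⁻¹' s) := by
  let y' : affineSpan ℝ s := ⟨y, subset_affineSpan ℝ s hy⟩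
  have : Nonempty (affineSpan ℝ s) := ⟨y'⟩
  let h := (AffineIsometryEquiv.vaddConst ℝ y').toHomeomorph
  have hchart : ⇑(affineSpanChart s y) = (↑) ∘ h := rfl
  rw [hchart, image_comp, preimage_comp, h.image_interior, h.image_preimage, intrinsicInterior]

protected theorem Convex.intrinsicInterior (hs : Convex ℝ s) :
    Convex ℝ (intrinsicInterior ℝ s) := by
  rcases s.eq_empty_or_nonempty with rfl | ⟨y, hy⟩
  · simpa using convex_empty
  rw [intrinsicInterior_eq_image_affineSpanChart hy]
  exact ((hs.affine_preimage _).interior).affine_image _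

theorem Convex.subset_closure_intrinsicInterior [FiniteDimensional ℝ E] (hs : Convex ℝ s) :
    s ⊆ closure (intrinsicInterior ℝ s) := by
  intro y hy
  have hconv : Convex ℝ (affineSpanChart s y ⁻¹' s) := hs.affine_preimage _
  have hint : (interior (affineSpanChart s y ⁻¹' s)).Nonempty := by
    have := Set.Nonempty.intrinsicInterior hs ⟨y, hy⟩
    rwa [intrinsicInterior_eq_image_affineSpanChart hy, image_nonempty] at this
  have hy0 :
      (0 : (affineSpan ℝ s).direction) ∈ closure (interior (affineSpanChart s y ⁻¹' s)) := by
    rw [hconv.closure_interior_eq_closure_of_nonempty_interior hint]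
    exact subset_closure (by simpa using hy)
  rw [intrinsicInterior_eq_image_affineSpanChart hy]
  simpa using continuous_affineSpanChart.continuousWithinAt.mem_closure_image hy0

theorem exists_pos_smul_sub_add_mem_of_mem_intrinsicInterior (hz : z ∈ intrinsicInterior ℝ s)
    (hy : y ∈ s) : ∃ ε : ℝ, 0 < ε ∧ ε • (z - y) + z ∈ s := by
  rw [intrinsicInterior_eq_image_affineSpanChart hy] at hz
  obtain ⟨v, hv, rfl⟩ := hz
  have hcont : Continuous fun ε : ℝ => (1 + ε) • v := by fun_prop
  have hev : ∀ᶠ ε in 𝓝 (0 : ℝ), (1 + ε) • v ∈ interior (affineSpanChart s y ⁻¹' s) :=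
    hcont.continuousAt.preimage_mem_nhds (by simpa using isOpen_interior.mem_nhds hv)
  have hev' : ∀ᶠ ε in 𝓝[>] (0 : ℝ), (1 + ε) • v ∈ interior (affineSpanChart s y ⁻¹' s) :=
    nhdsWithin_le_nhds hev
  obtain ⟨ε, hε, hεpos⟩ := (hev'.and self_mem_nhdsWithin).exists
  refine ⟨ε, hεpos, ?_⟩
  have := interior_subset hε
  simp only [mem_preimage, affineSpanChart_apply] at this
  convert this using 1
  simp [add_smul]
  abel

theorem LinearMap.eq_of_isMaxOn_of_mem_intrinsicInterior (f : E →ₗ[ℝ] ℝ) (hmax : IsMaxOn f s z)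
    (hz : z ∈ intrinsicInterior ℝ s) (hy : y ∈ s) : f y = f z := by
  obtain ⟨ε, hε, hmem⟩ := exists_pos_smul_sub_add_mem_of_mem_intrinsicInterior hz hy
  have hbeyond : f (ε • (z - y) + z) = ε * (f z - f y) + f z := by simp
  have hle_beyond := isMaxOn_iff.1 hmax _ hmem
  have hle_y := isMaxOn_iff.1 hmax _ hy
  nlinarith

theorem LinearMap.eq_of_isMinOn_of_mem_intrinsicInterior (f : E →ₗ[ℝ] ℝ) (hmin : IsMinOn f s z)
    (hz : z ∈ intrinsicInterior ℝ s) (hy : y ∈ s) : f y = f z :=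
  neg_inj.1 ((-f).eq_of_isMaxOn_of_mem_intrinsicInterior hmin.neg hz hy)

end IntrinsicInterior

theorem exists_ne_zero_forall_eq_of_affineSpan_ne_top {k V : Type*} [Field k] [AddCommGroup V]
    [Module k V] {s : Set V} {c : V} (hs : affineSpan k s ≠ ⊤) (hc : c ∈ s) :
    ∃ f : Module.Dual k V, f ≠ 0 ∧ ∀ w ∈ s, f w = f c := by
  have hdir : (affineSpan k s).direction < ⊤ := by
    refine lt_top_iff_ne_top.2 fun htop => hs ?_
    exact (AffineSubspace.direction_eq_top_iff_of_nonempty ⟨c, subset_affineSpan k s hc⟩).1 htop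
  obtain ⟨f, hf0, hker⟩ := Submodule.exists_le_ker_of_lt_top _ hdir
  refine ⟨f, hf0, fun w hw => sub_eq_zero.1 ?_⟩
  rw [← map_sub]
  exact hker (AffineSubspace.vsub_mem_direction (subset_affineSpan k s hw)
    (subset_affineSpan k s hc))

theorem AffineIndependent.eq_zero_of_forall_apply_eq {k V W ι : Type*} [Field k] [AddCommGroup V]
    [Module k V] [AddCommGroup W] [Module k W] [FiniteDimensional k V] [Fintype ι] {p : ι → V}
    (hp : AffineIndependent k p) (hcard : Fintype.card ι = Module.finrank k V + 1)
    {f : V →ₗ[k] W} (hf : ∀ i j, f (p i) = f (p j)) : f = 0 := by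
  have hspan : vectorSpan k (range p) ≤ LinearMap.ker f := by
    rw [vectorSpan_def, Submodule.span_le]
    rintro _ ⟨_, ⟨i, rfl⟩, _, ⟨j, rfl⟩, rfl⟩
    simp [hf i j]
  rw [hp.vectorSpan_eq_top_of_card_eq_finrank_add_one hcard, top_le_iff] at hspan
  exact LinearMap.ker_eq_top.1 hspan

section Separation

variable {E : Type*} [NormedAddCommGroup E] [NormedSpace ℝ E] [FiniteDimensional ℝ E]

theorem Convex.exists_ne_zero_forall_le_of_notMem {s : Set E} {x : E} (hs : Convex ℝ s)
    (hne : s.Nonempty) (hx : x ∉ s) : ∃ f : StrongDual ℝ E, f ≠ 0 ∧ ∀ w ∈ s, f w ≤ f x := by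
  by_cases htop : affineSpan ℝ s = ⊤
  · exact geometric_hahn_banach_of_nonempty_interior_point hs (fun h => hx (interior_subset h))
      ((hs.interior_nonempty_iff_affineSpan_eq_top).2 htop)
  obtain ⟨c, hc⟩ := hne
  obtain ⟨f, hf0, hconst⟩ := exists_ne_zero_forall_eq_of_affineSpan_ne_top htop hc
  let g := LinearMap.toContinuousLinearMap f
  have hg0 : g ≠ 0 := fun h => hf0 (by ext v; exact congr($h v))
  rcases le_total (g c) (g x) with hle | hle
  · exact ⟨g, hg0, fun w hw => (hconst w hw).trans_le hle⟩
  · refine ⟨-g, neg_ne_zero.2 hg0, fun w hw => ?_⟩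
    simpa [g, hconst w hw] using hle

theorem Convex.exists_ne_zero_forall_le_of_disjoint_intrinsicInterior {s t : Set E}
    (hs : Convex ℝ s) (ht : Convex ℝ t) (hsne : s.Nonempty) (htne : t.Nonempty)
    (hst : Disjoint (intrinsicInterior ℝ s) (intrinsicInterior ℝ t)) :
    ∃ f : StrongDual ℝ E, f ≠ 0 ∧ ∀ a ∈ s, ∀ b ∈ t, f a ≤ f b := by
  obtain ⟨a₀, ha₀⟩ := hsne.intrinsicInterior hs
  obtain ⟨b₀, hb₀⟩ := htne.intrinsicInterior ht
  have h0 : (0 : E) ∉ intrinsicInterior ℝ s - intrinsicInterior ℝ t := by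
    rintro ⟨a, ha, b, hb, hab⟩
    exact hst.ne_of_mem ha hb (sub_eq_zero.1 hab)
  obtain ⟨f, hf0, hf⟩ :=
    (hs.intrinsicInterior.sub ht.intrinsicInterior).exists_ne_zero_forall_le_of_notMem
      ⟨a₀ - b₀, sub_mem_sub ha₀ hb₀⟩ h0
  refine ⟨f, hf0, fun a ha b hb => ?_⟩
  have hrel : intrinsicInterior ℝ s ×ˢ intrinsicInterior ℝ t ⊆ {p : E × E | f p.1 ≤ f p.2} :=
    fun p hp => by simpa using hf _ (sub_mem_sub hp.1 hp.2)
  have hclosed : IsClosed {p : E × E | f p.1 ≤ f p.2} := isClosed_le (by fun_prop) (by fun_prop)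
  have hclosure := closure_minimal hrel hclosed
  rw [closure_prod_eq] at hclosure
  exact hclosure (show (a, b) ∈ _ from
    ⟨hs.subset_closure_intrinsicInterior ha, ht.subset_closure_intrinsicInterior hb⟩)

end Separation

theorem crossing_extension_general (d n pc qc : ℕ)
    (hpq : d + 1 ≤ pc + qc)
    (x : Fin n → Fin d → ℝ)
    (hgen : ∀ s : Finset (Fin n), s.card = d + 1 → AffineIndependent ℝ (fun i : s => x i))
    (U V U' V' : Finset (Fin n))
    (hUV : Disjoint U V) (hU : U.card = pc) (hV : V.card = qc)
    (hUU' : U ⊆ U') (hVV' : V ⊆ V')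
    (hcross : (intrinsicInterior ℝ (convexHull ℝ (x '' U)) ∩
               intrinsicInterior ℝ (convexHull ℝ (x '' V))).Nonempty) :
    (intrinsicInterior ℝ (convexHull ℝ (x '' U')) ∩
     intrinsicInterior ℝ (convexHull ℝ (x '' V'))).Nonempty := by
  obtain ⟨z, hzU, hzV⟩ := hcross
  have hUsub : convexHull ℝ (x '' U) ⊆ convexHull ℝ (x '' U') :=
    convexHull_mono (image_mono (Finset.coe_subset.2 hUU'))
  have hVsub : convexHull ℝ (x '' V) ⊆ convexHull ℝ (x '' V') :=
    convexHull_mono (image_mono (Finset.coe_subset.2 hVV'))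
  have hzU' := hUsub (intrinsicInterior_subset hzU)
  have hzV' := hVsub (intrinsicInterior_subset hzV)
  rw [← not_disjoint_iff_nonempty_inter]
  intro hdisj
  obtain ⟨f, hf0, hf⟩ :=
    (convex_convexHull ℝ _).exists_ne_zero_forall_le_of_disjoint_intrinsicInterior
      (convex_convexHull ℝ _) ⟨z, hzU'⟩ ⟨z, hzV'⟩ hdisj
  have hconst : ∀ i ∈ U ∪ V, f (x i) = f z := by
    simp only [Finset.mem_union]
    rintro i (hi | hi)
    · exact (f : (Fin d → ℝ) →ₗ[ℝ] ℝ).eq_of_isMaxOn_of_mem_intrinsicInterior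
        (isMaxOn_iff.2 fun w hw => hf w (hUsub hw) z hzV') hzU
        (subset_convexHull ℝ _ ⟨i, hi, rfl⟩)
    · exact (f : (Fin d → ℝ) →ₗ[ℝ] ℝ).eq_of_isMinOn_of_mem_intrinsicInterior
        (isMinOn_iff.2 fun w hw => hf z hzU' w (hVsub hw)) hzV
        (subset_convexHull ℝ _ ⟨i, hi, rfl⟩)
  obtain ⟨s, hsUV, hs⟩ := Finset.exists_subset_card_eq
    (show d + 1 ≤ (U ∪ V).card by rw [Finset.card_union_of_disjoint hUV]; omega)
  refine hf0 (ContinuousLinearMap.coe_injective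
    ((hgen s hs).eq_zero_of_forall_apply_eq (by simp [hs]) fun i j => ?_))
  simp [hconst i (hsUV i.2), hconst j (hsUV j.2)]

/-- Crossing extension lemma: if the (p-1)-simplex on U crosses the (q-1)-simplex on V,
then the (d-1)-simplices on any disjoint d-element supersets U' ⊇ U, V' ⊇ V also cross. -/
theorem crossing_extension (d n pc qc : ℕ)
    (hp2 : 2 ≤ pc) (hq2 : 2 ≤ qc) (hpd : pc ≤ d) (hqd : qc ≤ d) (hpq : d + 1 ≤ pc + qc)
    (x : Fin n → Fin d → ℝ)
    (hgen : ∀ s : Finset (Fin n), s.card = d + 1 → AffineIndependent ℝ (fun i : s => x i))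
    (U V U' V' : Finset (Fin n))
    (hUV : Disjoint U V) (hU : U.card = pc) (hV : V.card = qc)
    (hUU' : U ⊆ U') (hVV' : V ⊆ V') (hU'V' : Disjoint U' V')
    (hU' : U'.card = d) (hV' : V'.card = d)
    (hcross : (intrinsicInterior ℝ (convexHull ℝ (x '' U)) ∩
               intrinsicInterior ℝ (convexHull ℝ (x '' V))).Nonempty) :
    (intrinsicInterior ℝ (convexHull ℝ (x '' U')) ∩
     intrinsicInterior ℝ (convexHull ℝ (x '' V'))).Nonempty :=
  crossing_extension_general d n pc qc hpq x hgen U V U' V' hUV hU hV hUU' hVV' hcross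
end

section
/- Let t_1 < t_2 < ... < t_{d+3} be real numbers and let v_i = (a_i, b_i) ∈ R^2 for 1 ≤ i ≤ d+1, where a_i = (−1)^{d+1} (∏_{j≠i, j≤d+1} (t_{d+2} − t_j)) / (∏_{k≠i, k≤d+1} (t_k − t_i)) and b_i = (−1)^{d+1} (∏_{j≠i, j≤d+1} (t_{d+3} − t_j)) / (∏_{k≠i, k≤d+1} (t_k − t_i)). Then for each 1 ≤ i ≤ d+1, a_i and b_i are both positive if d+1+i is odd and both negative if d+1+i is even; moreover the slopes s_i = b_i / a_i satisfy s_1 > s_2 > ... > s_{d+1} > 0. -/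
/-!
Write `x_i = t_i` for `i ≤ d + 1`, `A = t_{d+2}`, `B = t_{d+3}`. The numerators
`∏_{j ≠ i} (A - x_j)` and `∏_{j ≠ i} (B - x_j)` are positive, while the Lagrange denominator
`∏_{k ≠ i} (x_k - x_i)` has exactly `i - 1` negative factors; this gives the signs. In the slope
the denominators cancel, and `b_i / a_i = (∏_j (B - x_j) / ∏_j (A - x_j)) · (A - x_i) / (B - x_i)`,
where `x ↦ (A - x) / (B - x) = 1 - (B - A) / (B - x)` is strictly decreasing on `x < A`.
-/

open Finset

theorem neg_one_pow_mul_prod_erase_sub_pos {n : ℕ} {x : Fin n → ℝ} (hx : StrictMono x)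
    (i : Fin n) : 0 < (-1) ^ (i : ℕ) * ∏ k ∈ univ.erase i, (x k - x i) := by
  have hsplit : univ.erase i = Iio i ∪ Ioi i := by
    ext k
    simp only [mem_erase, mem_union, mem_Iio, mem_Ioi, mem_univ, and_true]
    exact ne_iff_lt_or_gt
  have hbelow : ∏ k ∈ Iio i, (x k - x i) = (-1) ^ (i : ℕ) * ∏ k ∈ Iio i, (x i - x k) := by
    rw [← Fin.card_Iio i, ← prod_neg]
    simp only [neg_sub]
  rw [hsplit, prod_union (disjoint_left.2 fun k hk hk' => (mem_Iio.1 hk).asymm (mem_Ioi.1 hk')),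
    hbelow, ← mul_assoc, ← mul_assoc, ← pow_add, Even.neg_one_pow ⟨_, rfl⟩, one_mul]
  exact mul_pos (prod_pos fun k hk => sub_pos.2 (hx (mem_Iio.1 hk)))
    (prod_pos fun k hk => sub_pos.2 (hx (mem_Ioi.1 hk)))

theorem neg_one_pow_mul_div_sign {N D : ℝ} {m : ℕ} (hN : 0 < N) (hD : 0 < (-1) ^ m * D)
    (n : ℕ) : (Even (n + m) → 0 < (-1) ^ n * N / D) ∧ (Odd (n + m) → (-1) ^ n * N / D < 0) := by
  have key : (-1) ^ n * N / D = (-1) ^ (n + m) * (N / ((-1) ^ m * D)) := by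
    rw [pow_add, mul_div_assoc', mul_right_comm, mul_comm _ D,
      mul_div_mul_right _ _ (pow_ne_zero m (neg_ne_zero.2 one_ne_zero))]
  rw [key]
  exact ⟨fun h => by rw [h.neg_one_pow, one_mul]; exact div_pos hN hD,
    fun h => by rw [h.neg_one_pow, neg_one_mul, neg_lt_zero]; exact div_pos hN hD⟩

theorem sub_div_sub_lt_sub_div_sub {x y A B : ℝ} (hyx : y < x) (hxA : x < A) (hAB : A < B) :
    (A - x) / (B - x) < (A - y) / (B - y) := by
  rw [div_lt_div_iff₀ (by linarith) (by linarith)]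
  nlinarith

theorem prod_erase_div_prod_erase {ι K : Type*} [DecidableEq ι] [Field K] {s : Finset ι}
    {f g : ι → K} {i : ι} (hi : i ∈ s) (hf : f i ≠ 0) (hg : g i ≠ 0) :
    (∏ j ∈ s.erase i, g j) / ∏ j ∈ s.erase i, f j
      = (∏ j ∈ s, g j) / (∏ j ∈ s, f j) * (f i / g i) := by
  rw [← prod_erase_mul s g hi, ← prod_erase_mul s f hi, mul_div_mul_comm, mul_assoc,
    div_mul_div_cancel₀ hf, div_self hg, mul_one]

theorem strictAnti_prod_erase_div_prod_erase {ι : Type*} [Fintype ι] [DecidableEq ι]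
    [Preorder ι] {x : ι → ℝ} (hx : StrictMono x) {A B : ℝ} (hxA : ∀ j, x j < A) (hAB : A < B) :
    StrictAnti fun i => (∏ j ∈ univ.erase i, (B - x j)) / ∏ j ∈ univ.erase i, (A - x j) := by
  have hxB : ∀ j, x j < B := fun j => (hxA j).trans hAB
  intro i j hij
  dsimp only
  rw [prod_erase_div_prod_erase (mem_univ i) (sub_pos.2 (hxA i)).ne' (sub_pos.2 (hxB i)).ne',
    prod_erase_div_prod_erase (mem_univ j) (sub_pos.2 (hxA j)).ne' (sub_pos.2 (hxB j)).ne']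
  exact mul_lt_mul_of_pos_left (sub_div_sub_lt_sub_div_sub (hx hij) (hxA j) hAB)
    (div_pos (prod_pos fun k _ => sub_pos.2 (hxB k)) (prod_pos fun k _ => sub_pos.2 (hxA k)))

/-- Sign pattern and slope monotonicity of the Gale transform vectors of d+3 points on the
d-dimensional moment curve. -/
theorem gale_moment_curve_signs_slopes (d : ℕ) (t : Fin (d + 3) → ℝ) (ht : StrictMono t)
    (a b : Fin (d + 1) → ℝ)
    (ha : ∀ i : Fin (d + 1), a i = (-1 : ℝ) ^ (d + 1) *
        (∏ j ∈ Finset.univ.erase i, (t ⟨d + 1, by omega⟩ - t (Fin.castLE (by omega) j))) /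
        (∏ k ∈ Finset.univ.erase i, (t (Fin.castLE (by omega) k) - t (Fin.castLE (by omega) i))))
    (hb : ∀ i : Fin (d + 1), b i = (-1 : ℝ) ^ (d + 1) *
        (∏ j ∈ Finset.univ.erase i, (t ⟨d + 2, by omega⟩ - t (Fin.castLE (by omega) j))) /
        (∏ k ∈ Finset.univ.erase i, (t (Fin.castLE (by omega) k) - t (Fin.castLE (by omega) i)))) :
    (∀ i : Fin (d + 1),
      (Odd (d + 1 + ((i : ℕ) + 1)) → 0 < a i ∧ 0 < b i) ∧
      (Even (d + 1 + ((i : ℕ) + 1)) → a i < 0 ∧ b i < 0)) ∧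
    (∀ i j : Fin (d + 1), i < j → b j / a j < b i / a i) ∧
    (∀ i : Fin (d + 1), 0 < b i / a i) := by
  set x : Fin (d + 1) → ℝ := fun j => t (Fin.castLE (by omega) j)
  set A := t ⟨d + 1, by omega⟩
  set B := t ⟨d + 2, by omega⟩
  have hx : StrictMono x := ht.comp (Fin.strictMono_castLE _)
  have hxA : ∀ j, x j < A := fun j => ht j.isLt
  have hAB : A < B := ht (Fin.lt_def.2 (by simp))
  have hxB : ∀ j, x j < B := fun j => (hxA j).trans hAB
  have hNA : ∀ i, 0 < ∏ j ∈ univ.erase i, (A - x j) := fun i =>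
    prod_pos fun j _ => sub_pos.2 (hxA j)
  have hNB : ∀ i, 0 < ∏ j ∈ univ.erase i, (B - x j) := fun i =>
    prod_pos fun j _ => sub_pos.2 (hxB j)
  have hden := neg_one_pow_mul_prod_erase_sub_pos hx
  have hslope : ∀ i, b i / a i =
      (∏ j ∈ univ.erase i, (B - x j)) / ∏ j ∈ univ.erase i, (A - x j) := fun i => by
    have hD : ∏ k ∈ univ.erase i, (x k - x i) ≠ 0 := by
      intro h; simpa [h] using hden i
    rw [ha, hb, div_div_div_cancel_right₀ hD,
      mul_div_mul_left _ _ (pow_ne_zero _ (neg_ne_zero.2 one_ne_zero))]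
  refine ⟨fun i => ?_, fun i j hij => ?_, fun i => ?_⟩
  · have hsA := neg_one_pow_mul_div_sign (hNA i) (hden i) (d + 1)
    have hsB := neg_one_pow_mul_div_sign (hNB i) (hden i) (d + 1)
    rw [ha, hb]
    simp only [← add_assoc, Nat.odd_add_one, Nat.even_add_one, Nat.not_odd_iff_even,
      Nat.not_even_iff_odd]
    exact ⟨fun h => ⟨hsA.1 h, hsB.1 h⟩, fun h => ⟨hsA.2 h, hsB.2 h⟩⟩
  · rw [hslope, hslope]
    exact strictAnti_prod_erase_div_prod_erase hx hxA hAB hij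
  · rw [hslope]
    exact div_pos (hNB i) (hNA i)
end

section
/- Let p_1 ≺ p_2 ≺ ... ≺ p_{⌊d/2⌋+1} and q_1 ≺ q_2 ≺ ... ≺ q_{⌈d/2⌉+1} be two disjoint increasing sequences of points on the d-dimensional moment curve (ordered by their parameters). Then the ⌊d/2⌋-simplex Conv{p_i} and the ⌈d/2⌉-simplex Conv{q_j} have a common point in their relative interiors if and only if the two sequences interleave: every open parameter interval (q_j, q_{j+1}) contains exactly one p_i and every open parameter interval (p_i, p_{i+1}) contains exactly one q_j. -/
/-!
An affine dependence `∑ w c • γ (t c) = 0`, `∑ w c = 0` among `d + 2` points of the moment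
curve `γ` satisfies `∑ w c * P (t c) = 0` for every polynomial `P` of degree at most `d`. Taking
for `P` the product of `X - t e` over all parameters but two consecutive ones `a < b` leaves
`w a * P (t a) + w b * P (t b) = 0` with `P (t a) * P (t b) > 0`: the dependence is nowhere zero
and its signs alternate along the curve. The two simplices cross exactly when their vertex sets
are the two sign classes of this dependence, i.e. when the two vertex sets alternate along the
curve, and that is the interleaving condition.
-/

def momentCurve (d : ℕ) (t : ℝ) : Fin d → ℝ := fun j => t ^ ((j : ℕ) + 1)

open Finset Set

section Convexity

variable {ι α β E : Type*} [Fintype ι] [Fintype α] [Fintype β]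

theorem convexHull_range_eq_image_stdSimplex [AddCommGroup E] [Module ℝ E] (v : ι → E) :
    convexHull ℝ (range v) = (fun w => ∑ i, w i • v i) '' stdSimplex ℝ ι := by
  classical
  have : (fun w => ∑ i, w i • v i) = Fintype.linearCombination ℝ v := by
    ext; simp [Fintype.linearCombination_apply]
  rw [← convexHull_rangle_single_eq_stdSimplex, this, LinearMap.image_convexHull, ← range_comp]
  congr
  ext i
  simp

theorem exists_affine_dependence_of_finrank_add_one_lt_card {k : Type*} [Field k]
    [AddCommGroup E] [Module k E] [FiniteDimensional k E] (p : ι → E)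
    (h : Module.finrank k E + 1 < Fintype.card ι) :
    ∃ w : ι → k, w ≠ 0 ∧ ∑ i, w i = 0 ∧ ∑ i, w i • p i = 0 := by
  have hp : ¬AffineIndependent k p := fun hp =>
    h.not_ge (hp.card_le_finrank_succ.trans (by gcongr; exact Submodule.finrank_le _))
  simp only [affineIndependent_iff_of_fintype, not_forall] at hp
  obtain ⟨w, h₀, h₁, i, hi⟩ := hp
  exact ⟨w, fun hw => hi (congrFun hw i), h₀, by
    rwa [weightedVSub_eq_linear_combination _ h₀] at h₁⟩

theorem AffineIndependent.sum_smul_mem_intrinsicInterior_convexHull [NormedAddCommGroup E]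
    [NormedSpace ℝ E] {p : ι → E} (hp : AffineIndependent ℝ p) {w : ι → ℝ}
    (hw : ∀ i, 0 < w i) (hw₁ : ∑ i, w i = 1) :
    ∑ i, w i • p i ∈ intrinsicInterior ℝ (convexHull ℝ (range p)) := by
  have : Nonempty ι := univ_nonempty_iff.1 (nonempty_of_sum_ne_zero (hw₁ ▸ one_ne_zero))
  obtain ⟨i₀⟩ := id this
  set V := vectorSpan ℝ (range p)
  -- `p` becomes an affine basis of `V` once `p i₀` is translated to the origin
  let φ : V →ᵃⁱ[ℝ] E := (AffineIsometryEquiv.constVAdd ℝ E (p i₀)).toAffineIsometry.comp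
    V.subtypeₗᵢ.toAffineIsometry
  let q : ι → V := fun i =>
    ⟨p i -ᵥ p i₀, vsub_mem_vectorSpan ℝ (mem_range_self i) (mem_range_self i₀)⟩
  have hφq : φ.toAffineMap ∘ q = p := by
    ext i : 1
    simp [φ, q]
  have hq : AffineIndependent ℝ q := by
    rw [← φ.toAffineMap.affineIndependent_iff φ.injective, hφq]
    exact hp
  let b : AffineBasis ι ℝ V := ⟨q, hq, hq.affineSpan_eq_top_iff_card_eq_finrank_add_one.2
    hp.finrank_vectorSpan_add_one.symm⟩
  have hy : univ.affineCombination ℝ q w ∈ interior (convexHull ℝ (range b)) := by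
    rw [b.interior_convexHull]
    intro i
    change 0 < b.coord i (univ.affineCombination ℝ b w)
    rw [b.coord_apply_combination_of_mem (mem_univ i) hw₁]
    exact hw i
  have := φ.intrinsicInterior_image (convexHull ℝ (range q)) ▸
    mem_image_of_mem φ (interior_subset_intrinsicInterior hy)
  rwa [← φ.coe_toAffineMap, AffineMap.image_convexHull, ← range_comp, hφq,
    map_affineCombination _ _ _ hw₁, hφq, affineCombination_eq_linear_combination _ _ _ hw₁]
    at this

theorem exists_dependence_of_mem_convexHull_inter [AddCommGroup E] [Module ℝ E]
    {p : α ⊕ β → E} {x : E} (hxl : x ∈ convexHull ℝ (range fun i => p (.inl i)))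
    (hxr : x ∈ convexHull ℝ (range fun j => p (.inr j))) :
    ∃ w : α ⊕ β → ℝ, w ≠ 0 ∧ ∑ c, w c = 0 ∧ ∑ c, w c • p c = 0 ∧
      (∀ i, 0 ≤ w (.inl i)) ∧ ∀ j, w (.inr j) ≤ 0 := by
  rw [convexHull_range_eq_image_stdSimplex] at hxl hxr
  obtain ⟨a, ⟨ha₀, ha₁⟩, rfl⟩ := hxl
  obtain ⟨b, ⟨hb₀, hb₁⟩, hab⟩ := hxr
  refine ⟨Sum.elim a (-b), fun hw => ?_, ?_, ?_, ha₀, fun j => neg_nonpos.2 (hb₀ j)⟩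
  · have : a = 0 := funext fun i => congrFun hw (.inl i)
    simp [this] at ha₁
  · simp [Fintype.sum_sum_type, ha₁, hb₁]
  · simp [Fintype.sum_sum_type, hab]

theorem intrinsicInterior_inter_nonempty_of_dependence [NormedAddCommGroup E] [NormedSpace ℝ E]
    [Nonempty α] {p : α ⊕ β → E} (hpl : AffineIndependent ℝ fun i => p (.inl i))
    (hpr : AffineIndependent ℝ fun j => p (.inr j)) {w : α ⊕ β → ℝ} (h₀ : ∑ c, w c = 0)
    (h₁ : ∑ c, w c • p c = 0) (hl : ∀ i, 0 < w (.inl i)) (hr : ∀ j, w (.inr j) < 0) :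
    (intrinsicInterior ℝ (convexHull ℝ (range fun i => p (.inl i))) ∩
      intrinsicInterior ℝ (convexHull ℝ (range fun j => p (.inr j)))).Nonempty := by
  set A := ∑ i, w (.inl i)
  have hA : 0 < A := sum_pos (fun i _ => hl i) univ_nonempty
  rw [Fintype.sum_sum_type] at h₀ h₁
  refine ⟨∑ i, (w (.inl i) / A) • p (.inl i), hpl.sum_smul_mem_intrinsicInterior_convexHull
    (fun i => div_pos (hl i) hA) (by rw [← sum_div, div_self hA.ne']), ?_⟩
  convert hpr.sum_smul_mem_intrinsicInterior_convexHull (w := fun j => -w (.inr j) / A)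
    (fun j => div_pos (neg_pos.2 (hr j)) hA) ?_ using 1
  · simp only [div_eq_inv_mul, mul_smul, ← smul_sum, neg_smul, sum_neg_distrib]
    rw [eq_neg_of_add_eq_zero_left h₁]
  · rw [← sum_div, sum_neg_distrib, ← eq_neg_of_add_eq_zero_left h₀, div_self hA.ne']

end Convexity

section Consecutive

variable {ι : Type*} {t : ι → ℝ}

def Consecutive (t : ι → ℝ) (a b : ι) : Prop :=
  t a < t b ∧ ∀ c, t c ∉ Set.Ioo (t a) (t b)

theorem card_filter_mem_Ioo_lt [Fintype ι] {a b c : ι} {x y : ℝ}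
    (hxy : Set.Ioo x y ⊆ Set.Ioo (t a) (t b)) (hc : t c ∈ Set.Ioo (t a) (t b))
    (hc' : t c ∉ Set.Ioo x y) :
    #{e | t e ∈ Set.Ioo x y} < #{e | t e ∈ Set.Ioo (t a) (t b)} :=
  card_lt_card <| (Finset.ssubset_iff_of_subset fun e => by simpa using @hxy (t e)).2
    ⟨c, by simpa using hc, by simpa using hc'⟩

theorem iff_of_forall_consecutive [Finite ι] (ht : Function.Injective t) {f : ι → Prop}
    (hf : ∀ a b, Consecutive t a b → (f a ↔ f b)) (a b : ι) : f a ↔ f b := by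
  classical
  have := Fintype.ofFinite ι
  suffices key : ∀ n a b, #{c | t c ∈ Set.Ioo (t a) (t b)} = n → t a < t b → (f a ↔ f b) by
    rcases lt_trichotomy (t a) (t b) with h | h | h
    · exact key _ a b rfl h
    · rw [ht h]
    · exact (key _ b a rfl h).symm
  intro n
  induction n using Nat.strong_induction_on with
  | _ n ih =>
  intro a b hn hab
  by_cases hc : ∃ c, t c ∈ Set.Ioo (t a) (t b)
  · obtain ⟨c, hc⟩ := hc
    have hac := ih _ (hn ▸ card_filter_mem_Ioo_lt (Set.Ioo_subset_Ioo_right hc.2.le) hc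
      (by simp)) a c rfl hc.1
    have hcb := ih _ (hn ▸ card_filter_mem_Ioo_lt (Set.Ioo_subset_Ioo_left hc.1.le) hc
      (by simp)) c b rfl hc.2
    exact hac.trans hcb
  · exact hf a b ⟨hab, fun c h => hc ⟨c, h⟩⟩

variable {α β : Type*}

def ColorsAlternate (t : α ⊕ β → ℝ) : Prop :=
  ∀ a b, Consecutive t a b → a.isLeft ≠ b.isLeft

theorem consecutive_sumElim_swap {f : α → ℝ} {g : β → ℝ} {a b : β ⊕ α} :
    Consecutive (Sum.elim g f) a b ↔ Consecutive (Sum.elim f g) a.swap b.swap := by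
  cases a <;> cases b <;> simp [Consecutive, Sum.forall, and_comm]

theorem ColorsAlternate.sumElim_swap {f : α → ℝ} {g : β → ℝ}
    (halt : ColorsAlternate (Sum.elim f g)) : ColorsAlternate (Sum.elim g f) := fun a b hab => by
  have := halt _ _ (consecutive_sumElim_swap.1 hab)
  cases a <;> cases b <;> simp_all

variable {w : α ⊕ β → ℝ}

theorem isLeft_ne_of_mul_neg (hl : ∀ i, 0 < w (.inl i)) (hr : ∀ j, w (.inr j) < 0)
    {a b : α ⊕ β} (h : w a * w b < 0) : a.isLeft ≠ b.isLeft := by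
  rcases a with i | j <;> rcases b with i' | j'
  · exact absurd h (mul_pos (hl i) (hl i')).not_gt
  · simp
  · simp
  · exact absurd h (mul_pos_of_neg_of_neg (hr j) (hr j')).not_gt

theorem sign_classes_of_alternate [Finite α] [Finite β] {t : α ⊕ β → ℝ}
    (ht : Function.Injective t) (hw : ∀ c, w c ≠ 0)
    (hsign : ∀ a b, Consecutive t a b → w a * w b < 0)
    (hcol : ColorsAlternate t) :
    ((∀ i, 0 < w (.inl i)) ∧ ∀ j, w (.inr j) < 0) ∨
      ((∀ i, 0 < (-w) (.inl i)) ∧ ∀ j, (-w) (.inr j) < 0) := by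
  have key := iff_of_forall_consecutive ht (f := fun c => (0 < w c ↔ c.isLeft)) fun a b hab => by
    have hsgn : 0 < w a ↔ ¬0 < w b := by
      rcases mul_neg_iff.1 (hsign a b hab) with ⟨ha, hb⟩ | ⟨ha, hb⟩ <;>
        simp [ha, hb, ha.not_gt, hb.not_gt]
    have hc : a.isLeft ↔ ¬b.isLeft := by
      have := hcol a b hab
      revert this; cases a.isLeft <;> cases b.isLeft <;> decide
    tauto
  by_cases h : ∀ c, 0 < w c ↔ c.isLeft
  · exact .inl ⟨fun i => by simpa using h (.inl i),
      fun j => (not_lt.1 (by simpa using h (.inr j))).lt_of_ne (hw _)⟩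
  · obtain ⟨c₀, hc₀⟩ := not_forall.1 h
    have h' (c) : ¬(0 < w c ↔ c.isLeft) := fun hc => hc₀ ((key c c₀).1 hc)
    exact .inr ⟨fun i => neg_pos.2 ((not_lt.1 (by simpa using h' (.inl i))).lt_of_ne (hw _)),
      fun j => neg_neg_iff_pos.2 (by simpa using h' (.inr j))⟩

end Consecutive

section MomentCurve

open Polynomial

variable {ι : Type*} [Fintype ι] {d : ℕ} {t : ι → ℝ} {w : ι → ℝ}

theorem sum_mul_pow_eq_zero_of_momentCurve (h₀ : ∑ c, w c = 0)
    (h₁ : ∑ c, w c • momentCurve d (t c) = 0) {r : ℕ} (hr : r ≤ d) :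
    ∑ c, w c * t c ^ r = 0 := by
  rcases r with _ | j
  · simpa using h₀
  · simpa [momentCurve, Finset.sum_apply] using congrFun h₁ ⟨j, hr⟩

theorem sum_mul_eval_eq_zero_of_momentCurve (h₀ : ∑ c, w c = 0)
    (h₁ : ∑ c, w c • momentCurve d (t c) = 0) {P : ℝ[X]} (hP : P.natDegree ≤ d) :
    ∑ c, w c * P.eval (t c) = 0 := by
  simp_rw [eval_eq_sum_range' (Nat.lt_succ_of_le hP), mul_sum, mul_left_comm (w _)]
  rw [sum_comm]
  refine sum_eq_zero fun r hr => ?_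
  rw [← mul_sum, sum_mul_pow_eq_zero_of_momentCurve h₀ h₁ (Nat.lt_succ_iff.1 (mem_range.1 hr)),
    mul_zero]

-- `∏ e ∈ S, (X - t e)` has degree at most `d` and vanishes at the parameters in `S`.
theorem sum_compl_mul_prod_eq_zero_of_momentCurve [DecidableEq ι] (h₀ : ∑ c, w c = 0)
    (h₁ : ∑ c, w c • momentCurve d (t c) = 0) {S : Finset ι} (hS : #S ≤ d) :
    ∑ c ∈ Sᶜ, w c * ∏ e ∈ S, (t c - t e) = 0 := by
  have := sum_mul_eval_eq_zero_of_momentCurve h₀ h₁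
    ((Lagrange.natDegree_nodal (v := t)).trans_le hS)
  rw [← sum_compl_add_sum S, sum_eq_zero (s := S) fun c hc => by
    rw [Lagrange.eval_nodal_at_node hc, mul_zero], add_zero] at this
  simpa only [Lagrange.eval_nodal] using this

omit [Fintype ι] in
theorem prod_sub_ne_zero_of_notMem (ht : Function.Injective t) {S : Finset ι} {c : ι} (hc : c ∉ S) :
    ∏ e ∈ S, (t c - t e) ≠ 0 :=
  prod_ne_zero_iff.2 fun _ he => sub_ne_zero.2 (ht.ne (ne_of_mem_of_not_mem he hc).symm)

theorem affineIndependent_momentCurve (ht : Function.Injective t)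
    (hcard : Fintype.card ι ≤ d + 1) :
    AffineIndependent ℝ (fun c => momentCurve d (t c)) := by
  classical
  refine (affineIndependent_iff_of_fintype ℝ _).2 fun w h₀ h₁ a => ?_
  rw [weightedVSub_eq_linear_combination _ h₀] at h₁
  have hS : #(univ.erase a) ≤ d := by rw [card_erase_of_mem (mem_univ a), card_univ]; omega
  have := sum_compl_mul_prod_eq_zero_of_momentCurve h₀ h₁ hS
  rw [compl_erase, Finset.compl_univ, insert_empty, sum_singleton] at this
  exact (mul_eq_zero.1 this).resolve_right (prod_sub_ne_zero_of_notMem ht (notMem_erase a univ))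

theorem mul_prod_add_mul_prod_eq_zero_of_momentCurve [DecidableEq ι]
    (hcard : Fintype.card ι = d + 2) (h₀ : ∑ c, w c = 0)
    (h₁ : ∑ c, w c • momentCurve d (t c) = 0) {a b : ι} (hab : a ≠ b) :
    w a * ∏ e ∈ {a, b}ᶜ, (t a - t e) + w b * ∏ e ∈ {a, b}ᶜ, (t b - t e) = 0 := by
  have hS : #({a, b}ᶜ : Finset ι) ≤ d := by rw [card_compl, card_pair hab]; omega
  simpa [compl_compl, sum_pair hab] using sum_compl_mul_prod_eq_zero_of_momentCurve h₀ h₁ hS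

theorem ne_zero_of_momentCurve_dependence (ht : Function.Injective t)
    (hcard : Fintype.card ι = d + 2) (h₀ : ∑ c, w c = 0)
    (h₁ : ∑ c, w c • momentCurve d (t c) = 0) (hw : w ≠ 0) (a : ι) : w a ≠ 0 := by
  classical
  intro ha
  refine hw (funext fun b => ?_)
  obtain rfl | hab := eq_or_ne a b
  · exact ha
  have := mul_prod_add_mul_prod_eq_zero_of_momentCurve hcard h₀ h₁ hab
  rw [ha, zero_mul, zero_add] at this
  exact (mul_eq_zero.1 this).resolve_right (prod_sub_ne_zero_of_notMem ht (by simp))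

theorem mul_neg_of_consecutive_of_momentCurve_dependence (ht : Function.Injective t)
    (hcard : Fintype.card ι = d + 2) (h₀ : ∑ c, w c = 0)
    (h₁ : ∑ c, w c • momentCurve d (t c) = 0) (hw : w ≠ 0) {a b : ι}
    (hab : Consecutive t a b) : w a * w b < 0 := by
  classical
  have hne : a ≠ b := fun h => (h ▸ hab.1).false
  have hsum := mul_prod_add_mul_prod_eq_zero_of_momentCurve hcard h₀ h₁ hne
  set A := ∏ e ∈ {a, b}ᶜ, (t a - t e)
  set B := ∏ e ∈ {a, b}ᶜ, (t b - t e)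
  have hAB : 0 < A * B := by
    rw [← prod_mul_distrib]
    refine prod_pos fun e he => ?_
    have hea : t e ≠ t a := ht.ne (by rintro rfl; simp at he)
    have heb : t e ≠ t b := ht.ne (by rintro rfl; simp at he)
    have := hab.2 e
    rw [Set.mem_Ioo, not_and_or, not_lt, not_lt] at this
    rcases this with h | h
    · exact mul_pos (by linarith [lt_of_le_of_ne h hea]) (by linarith [hab.1])
    · exact mul_pos_of_neg_of_neg (by linarith [hab.1]) (by linarith [lt_of_le_of_ne' h heb])
  have hB : w b * B ≠ 0 := mul_ne_zero (ne_zero_of_momentCurve_dependence ht hcard h₀ h₁ hw b)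
    (right_ne_zero_of_mul hAB.ne')
  refine neg_of_mul_neg_left ?_ hAB.le
  rw [show w a * w b * (A * B) = -(w b * B) ^ 2 by linear_combination (w b * B) * hsum]
  exact neg_neg_of_pos (sq_pos_of_ne_zero hB)

end MomentCurve

section Interleaving

variable {m n : ℕ} {s : Fin (m + 1) → ℝ} {u : Fin (n + 1) → ℝ}

def OnePerGap (s : Fin (m + 1) → ℝ) (u : Fin (n + 1) → ℝ) : Prop :=
  ∀ j : Fin n, ∃! i, u j.castSucc < s i ∧ s i < u j.succ

theorem StrictMono.apply_notMem_Ioo_castSucc_succ (hu : StrictMono u) (j : Fin n)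
    (l : Fin (n + 1)) : u l ∉ Set.Ioo (u j.castSucc) (u j.succ) := fun h =>
  (Fin.castSucc_lt_iff_succ_le.1 (hu.lt_iff_lt.1 h.1)).not_gt (hu.lt_iff_lt.1 h.2)

theorem Fin.exists_castSucc_eq_of_lt {i i' : Fin (m + 1)} (h : i < i') :
    ∃ k : Fin m, k.castSucc = i ∧ k.succ ≤ i' :=
  ⟨i.castPred (Fin.ne_last_of_lt h), Fin.castSucc_castPred _ _,
    Fin.castSucc_lt_iff_succ_le.1 (by rwa [Fin.castSucc_castPred])⟩

theorem not_consecutive_inl_inl (hs : StrictMono s) (hsu : OnePerGap u s) (i i' : Fin (m + 1)) :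
    ¬Consecutive (Sum.elim s u) (.inl i) (.inl i') := by
  rintro ⟨hlt, hgap⟩
  obtain ⟨k, rfl, hk⟩ := Fin.exists_castSucc_eq_of_lt (hs.lt_iff_lt.1 hlt)
  obtain ⟨j, hj₁, hj₂⟩ := (hsu k).exists
  exact hgap (.inr j) ⟨hj₁, hj₂.trans_le (hs.monotone hk)⟩

theorem ColorsAlternate.onePerGap (hs : StrictMono s) (hu : StrictMono u)
    (halt : ColorsAlternate (Sum.elim s u)) : OnePerGap s u := by
  intro j
  obtain ⟨i, hi⟩ : ∃ i, u j.castSucc < s i ∧ s i < u j.succ := by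
    by_contra! h
    refine halt (.inr j.castSucc) (.inr j.succ) ⟨hu Fin.castSucc_lt_succ, ?_⟩ rfl
    rintro (i | l) hc
    · exact (h i hc.1).not_gt hc.2
    · exact hu.apply_notMem_Ioo_castSucc_succ j l hc
  refine ⟨i, hi, fun i' hi' => ?_⟩
  suffices key : ∀ i₁ i₂, u j.castSucc < s i₁ → s i₂ < u j.succ → ¬ i₁ < i₂ by
    exact le_antisymm (not_lt.1 (key i i' hi.1 hi'.2)) (not_lt.1 (key i' i hi'.1 hi.2))
  intro i₁ i₂ h₁ h₂ h₁₂
  obtain ⟨k, rfl, hk⟩ := Fin.exists_castSucc_eq_of_lt h₁₂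
  refine halt (.inl k.castSucc) (.inl k.succ) ⟨hs Fin.castSucc_lt_succ, ?_⟩ rfl
  rintro (i | l) hc
  · exact hs.apply_notMem_Ioo_castSucc_succ k i hc
  · exact hu.apply_notMem_Ioo_castSucc_succ j l
      ⟨h₁.trans hc.1, (hc.2.trans_le (hs.monotone hk)).trans h₂⟩

theorem onePerGap_and_onePerGap_iff (hs : StrictMono s) (hu : StrictMono u) :
    OnePerGap s u ∧ OnePerGap u s ↔ ColorsAlternate (Sum.elim s u) := by
  refine ⟨fun ⟨hsu, hus⟩ => ?_, fun halt => ⟨halt.onePerGap hs hu,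
    halt.sumElim_swap.onePerGap hu hs⟩⟩
  rintro (i | j) (i' | j') hab
  · exact absurd hab (not_consecutive_inl_inl hs hus i i')
  · simp
  · simp
  · exact absurd (consecutive_sumElim_swap.1 hab) (not_consecutive_inl_inl hu hsu j j')

end Interleaving

/-- Interleaving criterion: the ⌊d/2⌋-simplex and the ⌈d/2⌉-simplex spanned by two disjoint
point sequences on the moment curve cross iff the parameter sequences interleave. -/
theorem moment_curve_crossing_iff_interleave (d : ℕ)
    (s : Fin (d / 2 + 1) → ℝ) (u : Fin ((d + 1) / 2 + 1) → ℝ)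
    (hs : StrictMono s) (hu : StrictMono u)
    (hdisj : ∀ i j, s i ≠ u j) :
    (intrinsicInterior ℝ (convexHull ℝ (Set.range fun i => momentCurve d (s i))) ∩
     intrinsicInterior ℝ (convexHull ℝ (Set.range fun j => momentCurve d (u j)))).Nonempty ↔
    ((∀ j : Fin ((d + 1) / 2), ∃! i, u j.castSucc < s i ∧ s i < u j.succ) ∧
     (∀ i : Fin (d / 2), ∃! j, s i.castSucc < u j ∧ u j < s i.succ)) := by
  set t := Sum.elim s u
  have ht : Function.Injective t := hs.injective.sumElim hu.injective hdisj
  have hcard : Fintype.card (Fin (d / 2 + 1) ⊕ Fin ((d + 1) / 2 + 1)) = d + 2 := by simp; omega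
  have hind {n : ℕ} {v : Fin (n + 1) → ℝ} (hv : StrictMono v) (hn : n ≤ d) :
      AffineIndependent ℝ fun i => momentCurve d (v i) :=
    affineIndependent_momentCurve hv.injective (by simpa)
  change _ ↔ OnePerGap s u ∧ OnePerGap u s
  rw [onePerGap_and_onePerGap_iff hs hu]
  constructor
  · rintro ⟨x, hxs, hxu⟩
    obtain ⟨w, hw, h₀, h₁, hl, hr⟩ := exists_dependence_of_mem_convexHull_inter
      (p := fun c => momentCurve d (t c)) (intrinsicInterior_subset hxs)
      (intrinsicInterior_subset hxu)
    have hne := ne_zero_of_momentCurve_dependence ht hcard h₀ h₁ hw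
    exact fun a b hab => isLeft_ne_of_mul_neg (fun i => (hl i).lt_of_ne' (hne _))
      (fun j => (hr j).lt_of_ne (hne _))
      (mul_neg_of_consecutive_of_momentCurve_dependence ht hcard h₀ h₁ hw hab)
  · intro halt
    obtain ⟨w, hw, h₀, h₁⟩ := exists_affine_dependence_of_finrank_add_one_lt_card (k := ℝ)
      (fun c => momentCurve d (t c)) (by simp [hcard])
    rcases sign_classes_of_alternate ht (ne_zero_of_momentCurve_dependence ht hcard h₀ h₁ hw)
      (fun _ _ => mul_neg_of_consecutive_of_momentCurve_dependence ht hcard h₀ h₁ hw) halt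
      with ⟨hl, hr⟩ | ⟨hl, hr⟩
    · exact intrinsicInterior_inter_nonempty_of_dependence (p := fun c => momentCurve d (t c))
        (hind hs (by omega)) (hind hu (by omega)) h₀ h₁ hl hr
    · exact intrinsicInterior_inter_nonempty_of_dependence (p := fun c => momentCurve d (t c))
        (hind hs (by omega)) (hind hu (by omega)) (w := -w) (by simp [h₀]) (by simp [h₁]) hl hr
end

section
/- Let v_1, ..., v_m be m ≥ 3 vectors in R^2 such that every two of them are linearly independent. Then there exists a line through the origin with no v_i on it that partitions the vectors into two open half-planes containing exactly ⌊m/2⌋ and ⌈m/2⌉ of the vectors respectively. -/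
private lemma ivt_up (f : ℕ → ℕ) : ∀ n, (∀ k < n, f (k+1) = f k + 1 ∨ f k = f (k+1) + 1) →
    ∀ d, f 0 ≤ d → d ≤ f n → ∃ k ≤ n, f k = d := by
  intro n
  induction n with
  | zero => intro _ d h1 h2; exact ⟨0, le_rfl, le_antisymm h1 h2⟩
  | succ n ih =>
    intro hstep d h1 h2
    by_cases hd : d ≤ f n
    · obtain ⟨k, hk, hfk⟩ := ih (fun k hk => hstep k (by omega)) d h1 hd
      exact ⟨k, by omega, hfk⟩
    · have h := hstep n (by omega)
      have : f (n+1) = d := by omega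
      exact ⟨n+1, le_rfl, this⟩

private lemma ivt (f : ℕ → ℕ) (n d : ℕ)
    (hstep : ∀ k < n, f (k+1) = f k + 1 ∨ f k = f (k+1) + 1)
    (h : (f 0 ≤ d ∧ d ≤ f n) ∨ (f n ≤ d ∧ d ≤ f 0)) : ∃ k ≤ n, f k = d := by
  rcases h with ⟨h1, h2⟩ | ⟨h1, h2⟩
  · exact ivt_up f n hstep d h1 h2
  · obtain ⟨k, hk, hfk⟩ := ivt_up (fun k => f (n - k)) n (fun k hk => by
      have h := hstep (n - k - 1) (by omega)
      have ha : f (n - (k+1)) = f (n - k - 1) := congrArg f (by omega)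
      have hb : f (n - k) = f (n - k - 1 + 1) := congrArg f (by omega)
      show f (n - (k+1)) = f (n - k) + 1 ∨ f (n - k) = f (n - (k+1)) + 1
      omega) d (by simpa using h1) (by simpa using h2)
    exact ⟨n - k, by omega, hfk⟩

/-- Given m ≥ 3 pairwise linearly independent vectors in ℝ², there is a line through the
origin avoiding all of them that splits them into open half-planes with ⌊m/2⌋ and ⌈m/2⌉
vectors respectively. -/
theorem proper_linear_separation_exists (m : ℕ) (hm : 3 ≤ m) (v : Fin m → ℝ × ℝ)
    (hv : ∀ i j : Fin m, i ≠ j → LinearIndependent ℝ ![v i, v j]) :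
    ∃ w : ℝ × ℝ, w ≠ 0 ∧ (∀ i, w.1 * (v i).1 + w.2 * (v i).2 ≠ 0) ∧
      (Finset.univ.filter fun i => 0 < w.1 * (v i).1 + w.2 * (v i).2).card = m / 2 ∧
      (Finset.univ.filter fun i => w.1 * (v i).1 + w.2 * (v i).2 < 0).card = (m + 1) / 2 := by
  have hnt : Nontrivial (Fin m) := Fin.nontrivial_iff_two_le.mpr (by omega)
  -- all vectors are nonzero
  have hvne : ∀ i, v i ≠ 0 := by
    intro i
    obtain ⟨j, hj⟩ := exists_ne i
    have h := (hv i j (Ne.symm hj)).ne_zero 0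
    simpa using h
  -- pairwise cross products are nonzero
  have hcross : ∀ i j, i ≠ j → (v i).1 * (v j).2 - (v i).2 * (v j).1 ≠ 0 := by
    intro i j hij h0
    have h := LinearIndependent.pair_iff.mp (hv i j hij)
    have h1 := h ((v j).2) (-(v i).2) (by
      apply Prod.ext
      · simp only [Prod.fst_add, Prod.smul_fst, smul_eq_mul, Prod.fst_neg, Prod.fst_zero]
        linear_combination h0
      · simp only [Prod.snd_add, Prod.smul_snd, smul_eq_mul, Prod.snd_neg, Prod.snd_zero]
        ring)
    have h2 := h ((v j).1) (-(v i).1) (by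
      apply Prod.ext
      · simp only [Prod.fst_add, Prod.smul_fst, smul_eq_mul, Prod.fst_neg, Prod.fst_zero]
        ring
      · simp only [Prod.snd_add, Prod.smul_snd, smul_eq_mul, Prod.snd_neg, Prod.snd_zero]
        linear_combination -h0)
    exact hvne j (by rw [show v j = ((v j).1, (v j).2) from rfl, h2.1, h1.1]; rfl)
  -- pick t with ℓ = (1, t) nonzero on all v i
  obtain ⟨t, ht⟩ := Infinite.exists_notMem_finset
    (Finset.image (fun i => -(v i).1 / (v i).2) Finset.univ)
  set L : Fin m → ℝ := fun i => (v i).1 + t * (v i).2 with hLdef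
  have hL : ∀ i, L i ≠ 0 := by
    intro i h
    by_cases hy : (v i).2 = 0
    · have hx : (v i).1 = 0 := by simp [hLdef, hy] at h; exact h
      exact hvne i (by rw [show v i = ((v i).1, (v i).2) from rfl, hx, hy]; rfl)
    · apply ht
      rw [Finset.mem_image]
      refine ⟨i, Finset.mem_univ i, ?_⟩
      field_simp
      simp only [hLdef] at h
      linarith
  set M : Fin m → ℝ := fun i => -t * (v i).1 + (v i).2 with hMdef
  set s : Fin m → ℝ := fun i => M i / L i with hsdef
  have hs_inj : Function.Injective s := by
    intro i j hij
    by_contra hne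
    have hcr := hcross i j hne
    have : M i * L j = M j * L i := by
      have := div_eq_div_iff (hL i) (hL j) |>.mp hij
      linarith
    apply hcr
    have key : M i * L j - M j * L i = (1 + t^2) * ((v i).2 * (v j).1 - (v i).1 * (v j).2) := by
      simp only [hMdef, hLdef]; ring
    nlinarith [sq_nonneg t]
  -- sort the slopes
  set S : Finset ℝ := Finset.image s Finset.univ with hSdef
  have hScard : S.card = m := by
    rw [hSdef, Finset.card_image_of_injective _ hs_inj, Finset.card_univ, Fintype.card_fin]
  set e := S.orderIsoOfFin hScard with hedef
  set tt : Fin m → ℝ := fun k => (e k : ℝ) with httdef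
  have htt : StrictMono tt := fun a b hab => by
    simpa [httdef] using (e.strictMono hab)
  have hmemS : ∀ i, s i ∈ S := fun i => Finset.mem_image_of_mem s (Finset.mem_univ i)
  set r : Fin m → Fin m := fun i => e.symm ⟨s i, hmemS i⟩ with hrdef
  have hsr : ∀ i, tt (r i) = s i := by
    intro i
    simp only [httdef, hrdef]
    rw [OrderIso.apply_symm_apply]
  have hr_inj : Function.Injective r := by
    intro i j hij
    apply hs_inj
    have := congrArg tt hij
    rwa [hsr, hsr] at this
  have hr_surj : Function.Surjective r := Finite.surjective_of_injective hr_inj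
  -- candidate cut values
  have hm0 : 0 < m := by omega
  set c : ℕ → ℝ := fun k =>
    if hk : k = 0 then tt ⟨0, hm0⟩ - 1
    else if hk2 : k < m then (tt ⟨k-1, by omega⟩ + tt ⟨k, hk2⟩)/2
    else tt ⟨m-1, by omega⟩ + 1 with hcdef
  -- key comparison lemma
  have keyA : ∀ (i : Fin m) (k : ℕ), k ≤ m →
      ((s i < c k ↔ (r i : ℕ) < k) ∧ (c k < s i ↔ k ≤ (r i : ℕ))) := by
    intro i k hk
    rw [← hsr i]
    rcases Nat.eq_zero_or_pos k with hk0 | hkpos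
    · subst hk0
      have h0 : tt ⟨0, hm0⟩ ≤ tt (r i) := htt.monotone (by simp [Fin.le_def])
      constructor
      · simp only [hcdef, dif_pos rfl]
        constructor
        · intro h; linarith
        · intro h; omega
      · simp only [hcdef, dif_pos rfl]
        constructor
        · intro _; omega
        · intro _; linarith
    · rcases lt_or_ge k m with hkm | hkm
      · have hne : k ≠ 0 := by omega
        have hck : c k = (tt ⟨k-1, by omega⟩ + tt ⟨k, hkm⟩)/2 := by
          simp only [hcdef, dif_neg hne, dif_pos hkm]
        have hlt : tt ⟨k-1, by omega⟩ < tt ⟨k, hkm⟩ := htt (by simp [Fin.lt_def]; omega)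
        rw [hck]
        constructor
        · constructor
          · intro h
            have : tt (r i) < tt ⟨k, hkm⟩ := by linarith
            have := htt.lt_iff_lt.mp this
            simp [Fin.lt_def] at this
            omega
          · intro h
            have : r i ≤ (⟨k-1, by omega⟩ : Fin m) := by simp [Fin.le_def]; omega
            have := htt.monotone this
            linarith
        · constructor
          · intro h
            have : tt ⟨k-1, by omega⟩ < tt (r i) := by linarith
            have := htt.lt_iff_lt.mp this
            simp [Fin.lt_def] at this
            omega
          · intro h
            have : (⟨k, hkm⟩ : Fin m) ≤ r i := by simp [Fin.le_def]; omega
            have := htt.monotone this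
            linarith
      · have hkm' : k = m := by omega
        have hne : k ≠ 0 := by omega
        have hck : c k = tt ⟨m-1, by omega⟩ + 1 := by
          simp only [hcdef, dif_neg hne, dif_neg (by omega : ¬ k < m)]
        have h0 : tt (r i) ≤ tt ⟨m-1, by omega⟩ := htt.monotone (by
          simp [Fin.le_def]; omega)
        rw [hck]
        constructor
        · constructor
          · intro _; omega
          · intro _; linarith
        · constructor
          · intro h; linarith
          · intro h; omega
  -- the counting function
  set N : ℕ → ℕ := fun k => (Finset.univ.filter fun i =>
      (0 < L i ∧ k ≤ (r i : ℕ)) ∨ (L i < 0 ∧ (r i : ℕ) < k)).card with hNdef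
  set p : ℕ := (Finset.univ.filter fun i => 0 < L i).card with hpdef
  set q : ℕ := (Finset.univ.filter fun i => L i < 0).card with hqdef
  have hN0 : N 0 = p := by
    simp only [hNdef, hpdef]
    congr 1
    apply Finset.filter_congr
    intro i _
    simp
  have hNm : N m = q := by
    simp only [hNdef, hqdef]
    congr 1
    apply Finset.filter_congr
    intro i _
    have := (r i).isLt
    constructor
    · rintro (⟨_, h⟩ | ⟨h, _⟩)
      · omega
      · exact h
    · intro h
      right
      exact ⟨h, this⟩
  have hpq : p + q = m := by
    have : q = (Finset.univ.filter fun i => ¬ (0 < L i)).card := by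
      rw [hqdef]
      congr 1
      apply Finset.filter_congr
      intro i _
      simp only [not_lt]
      exact ⟨fun h => by linarith, fun h => lt_of_le_of_ne h (hL i)⟩
    rw [hpdef, this, Finset.card_filter_add_card_filter_not, Finset.card_univ, Fintype.card_fin]
  -- the step property
  have hstep : ∀ k < m, N (k+1) = N k + 1 ∨ N k = N (k+1) + 1 := by
    intro k hkm
    obtain ⟨i0, hi0⟩ := hr_surj ⟨k, hkm⟩
    have hri0 : (r i0 : ℕ) = k := by rw [hi0]
    have hcong : ∀ i : Fin m, i ≠ i0 → (((0 < L i ∧ k+1 ≤ (r i : ℕ)) ∨ (L i < 0 ∧ (r i : ℕ) < k+1)) ↔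
        ((0 < L i ∧ k ≤ (r i : ℕ)) ∨ (L i < 0 ∧ (r i : ℕ) < k))) := by
      intro i hne
      have : (r i : ℕ) ≠ k := by
        intro h
        apply hne
        apply hr_inj
        rw [hi0]
        exact Fin.ext h
      constructor
      · rintro (⟨h1, h2⟩ | ⟨h1, h2⟩)
        · exact Or.inl ⟨h1, by omega⟩
        · exact Or.inr ⟨h1, by omega⟩
      · rintro (⟨h1, h2⟩ | ⟨h1, h2⟩)
        · exact Or.inl ⟨h1, by omega⟩
        · exact Or.inr ⟨h1, by omega⟩
    rcases lt_trichotomy (L i0) 0 with hL0 | hL0 | hL0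
    · -- i0 enters at step k+1 : N(k+1) = N k + 1
      left
      have heq : (Finset.univ.filter fun i =>
          (0 < L i ∧ k+1 ≤ (r i : ℕ)) ∨ (L i < 0 ∧ (r i : ℕ) < k+1)) =
          insert i0 (Finset.univ.filter fun i =>
          (0 < L i ∧ k ≤ (r i : ℕ)) ∨ (L i < 0 ∧ (r i : ℕ) < k)) := by
        ext i
        simp only [Finset.mem_insert, Finset.mem_filter, Finset.mem_univ, true_and]
        by_cases hne : i = i0
        · subst hne
          simp only [hri0]
          constructor
          · intro _; left; trivial
          · intro _; exact Or.inr ⟨hL0, by omega⟩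
        · rw [hcong i hne]
          constructor
          · intro h; exact Or.inr h
          · rintro (h | h)
            · exact absurd h hne
            · exact h
      have hnotmem : i0 ∉ (Finset.univ.filter fun i =>
          (0 < L i ∧ k ≤ (r i : ℕ)) ∨ (L i < 0 ∧ (r i : ℕ) < k)) := by
        simp only [Finset.mem_filter, Finset.mem_univ, true_and, hri0]
        rintro (⟨h1, _⟩ | ⟨_, h2⟩)
        · linarith
        · omega
      rw [hNdef]
      simp only []
      rw [heq, Finset.card_insert_of_notMem hnotmem]
    · exact absurd hL0 (hL i0)
    · -- i0 leaves at step k+1 : N k = N(k+1) + 1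
      right
      have heq : (Finset.univ.filter fun i =>
          (0 < L i ∧ k ≤ (r i : ℕ)) ∨ (L i < 0 ∧ (r i : ℕ) < k)) =
          insert i0 (Finset.univ.filter fun i =>
          (0 < L i ∧ k+1 ≤ (r i : ℕ)) ∨ (L i < 0 ∧ (r i : ℕ) < k+1)) := by
        ext i
        simp only [Finset.mem_insert, Finset.mem_filter, Finset.mem_univ, true_and]
        by_cases hne : i = i0
        · subst hne
          simp only [hri0]
          constructor
          · intro _; left; trivial
          · intro _; left; exact ⟨hL0, le_refl k⟩
        · rw [hcong i hne]
          constructor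
          · intro h; exact Or.inr h
          · rintro (h | h)
            · exact absurd h hne
            · exact h
      have hnotmem : i0 ∉ (Finset.univ.filter fun i =>
          (0 < L i ∧ k+1 ≤ (r i : ℕ)) ∨ (L i < 0 ∧ (r i : ℕ) < k+1)) := by
        simp only [Finset.mem_filter, Finset.mem_univ, true_and, hri0]
        rintro (⟨_, h1⟩ | ⟨h2, _⟩)
        · omega
        · linarith
      rw [hNdef]
      simp only []
      rw [heq, Finset.card_insert_of_notMem hnotmem]
  -- intermediate value
  obtain ⟨k, hkm, hNk⟩ := ivt N m (m/2) hstep (by rw [hN0, hNm]; omega)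
  -- build w
  have hdot : ∀ i, (-t - c k) * (v i).1 + (1 - c k * t) * (v i).2 = L i * (s i - c k) := by
    intro i
    have hLi := hL i
    simp only [hLdef] at hLi
    simp only [hsdef, hLdef, hMdef]
    field_simp [hLi]
    ring
  have hkA : ∀ i : Fin m, (s i < c k ↔ (r i : ℕ) < k) ∧ (c k < s i ↔ k ≤ (r i : ℕ)) :=
    fun i => keyA i k hkm
  have hne : ∀ i, s i ≠ c k := by
    intro i
    rcases lt_or_ge ((r i : ℕ)) k with h | h
    · exact ne_of_lt ((hkA i).1.mpr h)
    · exact (ne_of_lt ((hkA i).2.mpr h)).symm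
  refine ⟨(-t - c k, 1 - c k * t), ?_, ?_, ?_, ?_⟩
  · intro h
    rw [Prod.ext_iff] at h
    simp only [Prod.fst_zero, Prod.snd_zero] at h
    have h1 : c k = -t := by linarith [h.1]
    have h2 : 1 - c k * t = 0 := h.2
    rw [h1] at h2
    nlinarith [sq_nonneg t]
  · intro i
    simp only []
    rw [hdot i]
    exact mul_ne_zero (hL i) (sub_ne_zero.mpr (hne i))
  · have heq : (Finset.univ.filter fun i =>
        0 < (-t - c k, 1 - c k * t).1 * (v i).1 + (-t - c k, 1 - c k * t).2 * (v i).2) =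
        (Finset.univ.filter fun i =>
        (0 < L i ∧ k ≤ (r i : ℕ)) ∨ (L i < 0 ∧ (r i : ℕ) < k)) := by
      apply Finset.filter_congr
      intro i _
      simp only []
      rw [hdot i, mul_pos_iff]
      constructor
      · rintro (⟨h1, h2⟩ | ⟨h1, h2⟩)
        · exact Or.inl ⟨h1, (hkA i).2.mp (by linarith)⟩
        · exact Or.inr ⟨h1, (hkA i).1.mp (by linarith)⟩
      · rintro (⟨h1, h2⟩ | ⟨h1, h2⟩)
        · exact Or.inl ⟨h1, by have := (hkA i).2.mpr h2; linarith⟩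
        · exact Or.inr ⟨h1, by have := (hkA i).1.mpr h2; linarith⟩
    rw [heq]
    exact hNk
  · have hsum : (Finset.univ.filter fun i =>
        0 < (-t - c k, 1 - c k * t).1 * (v i).1 + (-t - c k, 1 - c k * t).2 * (v i).2).card +
        (Finset.univ.filter fun i =>
        (-t - c k, 1 - c k * t).1 * (v i).1 + (-t - c k, 1 - c k * t).2 * (v i).2 < 0).card = m := by
      have heq2 : (Finset.univ.filter fun i =>
          (-t - c k, 1 - c k * t).1 * (v i).1 + (-t - c k, 1 - c k * t).2 * (v i).2 < 0) =
          (Finset.univ.filter fun i =>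
          ¬ (0 < (-t - c k, 1 - c k * t).1 * (v i).1 + (-t - c k, 1 - c k * t).2 * (v i).2)) := by
        apply Finset.filter_congr
        intro i _
        simp only [not_lt]
        constructor
        · intro h; linarith
        · intro h
          have hnz : (-t - c k) * (v i).1 + (1 - c k * t) * (v i).2 ≠ 0 := by
            rw [hdot i]
            exact mul_ne_zero (hL i) (sub_ne_zero.mpr (hne i))
          rcases lt_or_eq_of_le h with h' | h'
          · exact h'
          · exact absurd h' hnz
      rw [heq2, Finset.card_filter_add_card_filter_not, Finset.card_univ, Fintype.card_fin]
    have hpos : (Finset.univ.filter fun i =>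
        0 < (-t - c k, 1 - c k * t).1 * (v i).1 + (-t - c k, 1 - c k * t).2 * (v i).2).card = m / 2 := by
      have heq : (Finset.univ.filter fun i =>
          0 < (-t - c k, 1 - c k * t).1 * (v i).1 + (-t - c k, 1 - c k * t).2 * (v i).2) =
          (Finset.univ.filter fun i =>
          (0 < L i ∧ k ≤ (r i : ℕ)) ∨ (L i < 0 ∧ (r i : ℕ) < k)) := by
        apply Finset.filter_congr
        intro i _
        simp only []
        rw [hdot i, mul_pos_iff]
        constructor
        · rintro (⟨h1, h2⟩ | ⟨h1, h2⟩)
          · exact Or.inl ⟨h1, (hkA i).2.mp (by linarith)⟩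
          · exact Or.inr ⟨h1, (hkA i).1.mp (by linarith)⟩
        · rintro (⟨h1, h2⟩ | ⟨h1, h2⟩)
          · exact Or.inl ⟨h1, by have := (hkA i).2.mpr h2; linarith⟩
          · exact Or.inr ⟨h1, by have := (hkA i).1.mpr h2; linarith⟩
      rw [heq]
      exact hNk
    omega
end

section
/- If 6 points in R^3 are in convex position and in general position, then the number of unordered pairs of vertex-disjoint triangles (2-simplices), each spanned by 3 of the points, whose relative interiors intersect, is exactly 3. -/
open Finset Set

noncomputable section

namespace K36





theorem relint_triangle {a b c : Fin 3 → ℝ} (h : AffineIndependent ℝ ![a, b, c]) :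
    intrinsicInterior ℝ (convexHull ℝ {a, b, c}) =
      {x | ∃ α β γ : ℝ, 0 < α ∧ 0 < β ∧ 0 < γ ∧ α + β + γ = 1 ∧ α • a + β • b + γ • c = x} := by
  classical
  have hrange : Set.range ![a, b, c] = ({a, b, c} : Set (Fin 3 → ℝ)) := by
    ext x
    simp [Matrix.range_cons, Matrix.range_empty]
    tauto
  have hab : a ≠ b := by
    intro e
    have := h.injective (a₁ := 0) (a₂ := 1) (by simp [e])
    simp at this
  have hac : a ≠ c := by
    intro e
    have := h.injective (a₁ := 0) (a₂ := 2) (by simp [e])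
    simp at this
  have hbc : b ≠ c := by
    intro e
    have := h.injective (a₁ := 1) (a₂ := 2) (by simp [e])
    simp at this
  have hS : AffineIndependent ℝ ((↑) : ({a,b,c} : Set (Fin 3 → ℝ)) → (Fin 3 → ℝ)) := by
    rw [← hrange]; exact h.range
  obtain ⟨t, hst, hti, htspan⟩ := exists_subset_affineIndependent_affineSpan_eq_top hS
  haveI : Finite t := finite_of_fin_dim_affineIndependent ℝ hti
  haveI : Fintype t := Fintype.ofFinite _
  set B : AffineBasis t ℝ (Fin 3 → ℝ) := ⟨(↑), hti, by rwa [Subtype.range_coe]⟩ with hB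
  have hBcoe : ∀ i : t, B i = (i : Fin 3 → ℝ) := fun _ => rfl
  have ha : a ∈ t := hst (by simp)
  have hb : b ∈ t := hst (by simp)
  have hc : c ∈ t := hst (by simp)
  set ia : t := ⟨a, ha⟩
  set ib : t := ⟨b, hb⟩
  set ic : t := ⟨c, hc⟩
  have hiaib : ia ≠ ib := fun e => hab (congrArg Subtype.val e)
  have hiaic : ia ≠ ic := fun e => hac (congrArg Subtype.val e)
  have hibic : ib ≠ ic := fun e => hbc (congrArg Subtype.val e)
  have hcoordB : ∀ i j : t, B.coord i (j : Fin 3 → ℝ) = if i = j then 1 else 0 := by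
    intro i j
    have := B.coord_apply i j
    rwa [hBcoe] at this
  -- nonnegativity of coordinates on the hull
  have hullNonneg : ∀ (i : t) x, x ∈ convexHull ℝ ({a,b,c} : Set (Fin 3 → ℝ)) →
      0 ≤ B.coord i x := by
    intro i x hx
    have hsub : ({a,b,c} : Set (Fin 3 → ℝ)) ⊆ (B.coord i) ⁻¹' Set.Ici 0 := by
      intro z hz
      simp only [Set.mem_preimage, Set.mem_Ici]
      have hz' : z ∈ t := hst hz
      have := hcoordB i ⟨z, hz'⟩
      rw [show z = ((⟨z, hz'⟩ : t) : Fin 3 → ℝ) from rfl, this]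
      split <;> norm_num
    exact convexHull_min hsub ((convex_Ici (0:ℝ)).affine_preimage (B.coord i)) hx
  -- vanishing of exterior coordinates on the affine span
  have hcoord0 : ∀ i : t, (i : Fin 3 → ℝ) ∉ ({a,b,c} : Set (Fin 3 → ℝ)) →
      ∀ x ∈ affineSpan ℝ ({a,b,c} : Set (Fin 3 → ℝ)), B.coord i x = 0 := by
    intro i hi x hx
    rw [← hrange] at hx
    obtain ⟨s, w, hw, rfl⟩ := eq_affineCombination_of_mem_affineSpan hx
    rw [Finset.map_affineCombination _ _ _ hw,
      affineCombination_eq_linear_combination _ _ _ hw]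
    apply Finset.sum_eq_zero
    intro j hj
    have hmem : ![a,b,c] j ∈ ({a,b,c} : Set (Fin 3 → ℝ)) := by fin_cases j <;> simp
    have hcj : B.coord i (![a,b,c] j) = if i = ⟨![a,b,c] j, hst hmem⟩ then 1 else 0 :=
      hcoordB i ⟨![a,b,c] j, hst hmem⟩
    have : (⇑(B.coord i) ∘ ![a,b,c]) j = 0 := by
      simp only [Function.comp_apply, hcj]
      rw [if_neg]
      intro e
      exact hi (by rw [e]; exact hmem)
    rw [this, smul_zero]
  -- representation of points of the span in terms of the three coordinates
  have hrep : ∀ x ∈ affineSpan ℝ ({a,b,c} : Set (Fin 3 → ℝ)),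
      (B.coord ia x) • a + (B.coord ib x) • b + (B.coord ic x) • c = x ∧
      B.coord ia x + B.coord ib x + B.coord ic x = 1 := by
    intro x hx
    have hsum1 : ∑ i : t, B.coord i x = 1 := B.sum_coord_apply_eq_one x
    have hx' : (Finset.univ.affineCombination ℝ (fun i : t => (i : Fin 3 → ℝ))
        fun i => B.coord i x) = x := by
      have := B.affineCombination_coord_eq_self x
      simpa [hBcoe] using this
    have hlin : ∑ i : t, B.coord i x • (i : Fin 3 → ℝ) = x := by
      rw [← affineCombination_eq_linear_combination _ _ _ hsum1]; exact hx'
    have hzero : ∀ i : t, i ∉ ({ia, ib, ic} : Finset t) → B.coord i x = 0 := by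
      intro i hi
      apply hcoord0 i _ x hx
      intro hmem
      apply hi
      simp only [Set.mem_insert_iff, Set.mem_singleton_iff] at hmem
      simp only [Finset.mem_insert, Finset.mem_singleton]
      rcases hmem with h1 | h1 | h1
      · exact Or.inl (Subtype.ext h1)
      · exact Or.inr (Or.inl (Subtype.ext h1))
      · exact Or.inr (Or.inr (Subtype.ext h1))
    have e1 : ∑ i ∈ ({ia,ib,ic} : Finset t), B.coord i x • (i : Fin 3 → ℝ)
        = ∑ i : t, B.coord i x • (i : Fin 3 → ℝ) :=
      Finset.sum_subset (Finset.subset_univ _)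
        (by intro i _ hi; rw [hzero i hi, zero_smul])
    have e2 : ∑ i ∈ ({ia,ib,ic} : Finset t), B.coord i x = ∑ i : t, B.coord i x :=
      Finset.sum_subset (Finset.subset_univ _)
        (by intro i _ hi; rw [hzero i hi])
    rw [Finset.sum_insert (by simp [hiaib, hiaic]),
      Finset.sum_insert (by simp [hibic]), Finset.sum_singleton] at e1 e2
    constructor
    · rw [add_assoc]; exact e1.trans hlin
    · rw [add_assoc]; exact e2.trans hsum1
  -- membership in the hull from a nonnegative combination
  have hK3 : ∀ α β γ : ℝ, 0 ≤ α → 0 ≤ β → 0 ≤ γ → α + β + γ = 1 →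
      α • a + β • b + γ • c ∈ convexHull ℝ ({a,b,c} : Set (Fin 3 → ℝ)) := by
    intro α β γ hα hβ hγ hs
    have hset : ({a,b,c} : Set (Fin 3 → ℝ)) = (({a,b,c} : Finset (Fin 3 → ℝ)) : Set (Fin 3 → ℝ)) := by
      simp
    rw [hset, mem_convexHull]
    refine ⟨fun v => if v = a then α else if v = b then β else γ, ?_, ?_, ?_⟩
    · intro y _
      dsimp only
      split_ifs <;> assumption
    · rw [Finset.sum_insert (by simp [hab, hac]), Finset.sum_insert (by simp [hbc]),
        Finset.sum_singleton]
      simp [Ne.symm hab, Ne.symm hac, Ne.symm hbc]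
      linarith
    · rw [Finset.centerMass_eq_of_sum_1]
      · rw [Finset.sum_insert (by simp [hab, hac]), Finset.sum_insert (by simp [hbc]),
          Finset.sum_singleton]
        simp [Ne.symm hab, Ne.symm hac, Ne.symm hbc]
        abel
      · rw [Finset.sum_insert (by simp [hab, hac]), Finset.sum_insert (by simp [hbc]),
          Finset.sum_singleton]
        simp [Ne.symm hab, Ne.symm hac, Ne.symm hbc]
        linarith
  -- coordinates of an explicit affine combination
  have hK4 : ∀ α β γ : ℝ, α + β + γ = 1 →
      B.coord ia (α • a + β • b + γ • c) = α ∧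
      B.coord ib (α • a + β • b + γ • c) = β ∧
      B.coord ic (α • a + β • b + γ • c) = γ := by
    intro α β γ hs
    set W : t → ℝ := fun i => if i = ia then α else if i = ib then β else if i = ic then γ else 0
      with hW
    have hvan : ∀ i ∈ (Finset.univ : Finset t), i ∉ ({ia,ib,ic} : Finset t) → W i = 0 := by
      intro i _ hi
      simp only [Finset.mem_insert, Finset.mem_singleton, not_or] at hi
      simp [hW, hi.1, hi.2.1, hi.2.2]
    have htriple : ∑ i ∈ ({ia,ib,ic} : Finset t), W i = α + β + γ := by
      rw [Finset.sum_insert (by simp [hiaib, hiaic]), Finset.sum_insert (by simp [hibic]),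
        Finset.sum_singleton]
      simp [hW, hiaib.symm, hiaic.symm, hibic.symm]
      ring
    have hWsum : ∑ i : t, W i = 1 := by
      rw [← Finset.sum_subset (Finset.subset_univ ({ia,ib,ic} : Finset t)) hvan, htriple, hs]
    have hWcomb : (Finset.univ.affineCombination ℝ (⇑B) W) = α • a + β • b + γ • c := by
      rw [affineCombination_eq_linear_combination _ _ _ hWsum]
      rw [← Finset.sum_subset (Finset.subset_univ ({ia,ib,ic} : Finset t))
        (by intro i _ hi; rw [hvan i (Finset.mem_univ i) hi, zero_smul])]
      rw [Finset.sum_insert (by simp [hiaib, hiaic]), Finset.sum_insert (by simp [hibic]),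
        Finset.sum_singleton]
      simp [hW, hBcoe, hiaib.symm, hiaic.symm, hibic.symm]
      abel
    refine ⟨?_, ?_, ?_⟩
    · have := B.coord_apply_combination_of_mem (Finset.mem_univ ia) hWsum
      rw [hWcomb] at this
      simpa [hW] using this
    · have := B.coord_apply_combination_of_mem (Finset.mem_univ ib) hWsum
      rw [hWcomb] at this
      simpa [hW, hiaib.symm] using this
    · have := B.coord_apply_combination_of_mem (Finset.mem_univ ic) hWsum
      rw [hWcomb] at this
      simpa [hW, hiaic.symm, hibic.symm] using this
  ext x
  simp only [Set.mem_setOf_eq]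
  constructor
  · intro hx
    rw [mem_intrinsicInterior] at hx
    obtain ⟨y, hy, hyx⟩ := hx
    have hle : affineSpan ℝ ((convexHull ℝ) ({a,b,c} : Set (Fin 3 → ℝ)))
        ≤ affineSpan ℝ ({a,b,c} : Set (Fin 3 → ℝ)) := by
      rw [affineSpan_le]
      exact convexHull_subset_affineSpan _
    have hle' : affineSpan ℝ ({a,b,c} : Set (Fin 3 → ℝ))
        ≤ affineSpan ℝ ((convexHull ℝ) ({a,b,c} : Set (Fin 3 → ℝ))) :=
      affineSpan_mono ℝ (subset_convexHull ℝ _)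
    have hspan : (y : Fin 3 → ℝ) ∈ affineSpan ℝ ({a,b,c} : Set (Fin 3 → ℝ)) := hle y.2
    have hhull : (y : Fin 3 → ℝ) ∈ convexHull ℝ ({a,b,c} : Set (Fin 3 → ℝ)) :=
      Set.mem_preimage.mp (interior_subset hy)
    have hpos : ∀ i : t, (i : Fin 3 → ℝ) ∈ ({a,b,c} : Set (Fin 3 → ℝ)) →
        0 < B.coord i (y : Fin 3 → ℝ) := by
      intro i hiS
      rcases (hullNonneg i _ hhull).lt_or_eq with hlt | heq
      · exact hlt
      exfalso
      have hms : (∑ _j : Fin 3, (1:ℝ)/3) = 1 := by norm_num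
      set m : Fin 3 → ℝ := Finset.univ.affineCombination ℝ ![a,b,c] (fun _ => (1:ℝ)/3) with hm
      have hmspan : m ∈ affineSpan ℝ ({a,b,c} : Set (Fin 3 → ℝ)) := by
        rw [← hrange]
        exact affineCombination_mem_affineSpan hms _
      have hca : B.coord i a = if i = ia then 1 else 0 := hcoordB i ia
      have hcb : B.coord i b = if i = ib then 1 else 0 := hcoordB i ib
      have hcc : B.coord i c = if i = ic then 1 else 0 := hcoordB i ic
      have hcm : B.coord i m = 1/3 := by
        rw [hm, Finset.map_affineCombination _ _ _ hms,
          affineCombination_eq_linear_combination _ _ _ hms, Fin.sum_univ_three]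
        simp only [Function.comp_apply, Matrix.cons_val_zero, Matrix.cons_val_one,
          Matrix.head_cons, Matrix.cons_val_two, Matrix.tail_cons, smul_eq_mul]
        rw [hca, hcb, hcc]
        rcases hiS with h1 | h1 | h1
        · have hi' : i = ia := Subtype.ext h1
          rw [if_pos hi', if_neg (by rw [hi']; exact hiaib), if_neg (by rw [hi']; exact hiaic)]
          norm_num
        · have hi' : i = ib := Subtype.ext h1
          rw [if_pos hi', if_neg (by rw [hi']; exact hiaib.symm), if_neg (by rw [hi']; exact hibic)]
          norm_num
        · have hi' : i = ic := Subtype.ext h1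
          rw [if_pos hi', if_neg (by rw [hi']; exact hiaic.symm),
            if_neg (by rw [hi']; exact hibic.symm)]
          norm_num
      obtain ⟨ε, hε, hball⟩ := Metric.isOpen_iff.mp isOpen_interior y hy
      have hym : (y : Fin 3 → ℝ) ≠ m := by
        intro e
        rw [← e, ← heq] at hcm
        norm_num at hcm
      have hnm : 0 < ‖(y : Fin 3 → ℝ) - m‖ := by
        rw [norm_pos_iff]
        exact sub_ne_zero.mpr hym
      set τ : ℝ := ε / (2 * ‖(y : Fin 3 → ℝ) - m‖) with hτ
      have hτpos : 0 < τ := div_pos hε (by positivity)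
      set z : Fin 3 → ℝ := τ • ((y : Fin 3 → ℝ) - m) + (y : Fin 3 → ℝ) with hz
      have hzspan : z ∈ affineSpan ℝ ({a,b,c} : Set (Fin 3 → ℝ)) := by
        have := (affineSpan ℝ ({a,b,c} : Set (Fin 3 → ℝ))).smul_vsub_vadd_mem τ hspan hmspan hspan
        simpa [vsub_eq_sub, vadd_eq_add, hz] using this
      have hzc : B.coord i z
          = τ * (B.coord i (y : Fin 3 → ℝ) - B.coord i m) + B.coord i (y : Fin 3 → ℝ) := by
        have h1 : z = τ • ((y : Fin 3 → ℝ) -ᵥ m) +ᵥ (y : Fin 3 → ℝ) := by rw [hz]; rfl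
        rw [h1, AffineMap.map_vadd, (B.coord i).linear.map_smul, AffineMap.linearMap_vsub]
        simp [vsub_eq_sub, vadd_eq_add, smul_eq_mul]
      rw [← heq, hcm] at hzc
      have hzneg : B.coord i z < 0 := by
        have h2 : B.coord i z = -(τ/3) := by rw [hzc]; ring
        rw [h2]
        linarith
      have hzT : z ∈ affineSpan ℝ (convexHull ℝ ({a,b,c} : Set (Fin 3 → ℝ))) := hle' hzspan
      have hdist : dist (⟨z, hzT⟩ : affineSpan ℝ (convexHull ℝ ({a,b,c} : Set (Fin 3 → ℝ)))) y
          < ε := by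
        rw [Subtype.dist_eq]
        show dist z (y : Fin 3 → ℝ) < ε
        rw [dist_eq_norm, hz, add_sub_cancel_right, norm_smul, Real.norm_eq_abs,
          abs_of_pos hτpos]
        have h3 : τ * ‖(y : Fin 3 → ℝ) - m‖ = ε/2 := by
          rw [hτ]
          field_simp
        rw [h3]
        linarith
      have hzmem : z ∈ convexHull ℝ ({a,b,c} : Set (Fin 3 → ℝ)) :=
        Set.mem_preimage.mp (interior_subset (hball hdist))
      exact absurd (hullNonneg i z hzmem) (not_le.mpr hzneg)
    obtain ⟨hcomb, hsum⟩ := hrep (y : Fin 3 → ℝ) hspan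
    exact ⟨B.coord ia (y : Fin 3 → ℝ), B.coord ib (y : Fin 3 → ℝ), B.coord ic (y : Fin 3 → ℝ),
      hpos ia (Set.mem_insert _ _), hpos ib (by right; left; rfl), hpos ic (by right; right; rfl),
      hsum, by rw [hcomb, hyx]⟩
  · rintro ⟨α, β, γ, hα, hβ, hγ, hsum, rfl⟩
    have hxhull : α • a + β • b + γ • c ∈ convexHull ℝ ({a,b,c} : Set (Fin 3 → ℝ)) :=
      hK3 α β γ hα.le hβ.le hγ.le hsum
    have hxT : α • a + β • b + γ • c ∈ affineSpan ℝ (convexHull ℝ ({a,b,c} : Set (Fin 3 → ℝ))) :=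
      subset_affineSpan ℝ _ hxhull
    rw [mem_intrinsicInterior]
    refine ⟨⟨_, hxT⟩, ?_, rfl⟩
    set T := affineSpan ℝ (convexHull ℝ ({a,b,c} : Set (Fin 3 → ℝ))) with hT
    set U : Set T := {z : T | 0 < B.coord ia (z : Fin 3 → ℝ) ∧ 0 < B.coord ib (z : Fin 3 → ℝ)
      ∧ 0 < B.coord ic (z : Fin 3 → ℝ)} with hU
    have hcont : ∀ i : t, Continuous fun z : T => B.coord i (z : Fin 3 → ℝ) :=
      fun i => (continuous_barycentric_coord B i).comp continuous_subtype_val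
    have hUopen : IsOpen U := by
      have hUeq : U = ((fun z : T => B.coord ia (z : Fin 3 → ℝ)) ⁻¹' Set.Ioi 0)
          ∩ (((fun z : T => B.coord ib (z : Fin 3 → ℝ)) ⁻¹' Set.Ioi 0)
          ∩ ((fun z : T => B.coord ic (z : Fin 3 → ℝ)) ⁻¹' Set.Ioi 0)) := by
        ext z
        simp [hU]
      rw [hUeq]
      exact (isOpen_Ioi.preimage (hcont ia)).inter
        ((isOpen_Ioi.preimage (hcont ib)).inter (isOpen_Ioi.preimage (hcont ic)))
    have hUsub : U ⊆ Subtype.val ⁻¹' (convexHull ℝ ({a,b,c} : Set (Fin 3 → ℝ))) := by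
      intro z hzU
      have hzspan : (z : Fin 3 → ℝ) ∈ affineSpan ℝ ({a,b,c} : Set (Fin 3 → ℝ)) := by
        have hle2 : affineSpan ℝ ((convexHull ℝ) ({a,b,c} : Set (Fin 3 → ℝ)))
            ≤ affineSpan ℝ ({a,b,c} : Set (Fin 3 → ℝ)) := by
          rw [affineSpan_le]
          exact convexHull_subset_affineSpan _
        exact hle2 z.2
      obtain ⟨hcomb, hsum'⟩ := hrep (z : Fin 3 → ℝ) hzspan
      rw [Set.mem_preimage, ← hcomb]
      exact hK3 _ _ _ hzU.1.le hzU.2.1.le hzU.2.2.le hsum'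
    have hmemU : (⟨_, hxT⟩ : T) ∈ U := by
      obtain ⟨h1, h2, h3⟩ := hK4 α β γ hsum
      refine ⟨?_, ?_, ?_⟩
      · show 0 < B.coord ia (α • a + β • b + γ • c)
        rw [h1]; exact hα
      · show 0 < B.coord ib (α • a + β • b + γ • c)
        rw [h2]; exact hβ
      · show 0 < B.coord ic (α • a + β • b + γ • c)
        rw [h3]; exact hγ
    exact interior_maximal hUsub hUopen hmemU


variable {p : Fin 6 → Fin 3 → ℝ}






variable {p : Fin 6 → Fin 3 → ℝ}

/-- An affine dependence among the six points. -/
def Dep (p : Fin 6 → Fin 3 → ℝ) (w : Fin 6 → ℝ) : Prop :=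
  ∑ i, w i = 0 ∧ ∑ i, w i • p i = 0

lemma inj3 {α : Type*} {x y z : α} (hxy : x ≠ y) (hxz : x ≠ z) (hyz : y ≠ z) :
    Function.Injective ![x, y, z] := by
  intro a b hab
  fin_cases a <;> fin_cases b <;> simp_all

lemma tri_indep
    (hgen : ∀ s : Finset (Fin 6), s.card = 4 → AffineIndependent ℝ (fun i : s => p i))
    {i j k : Fin 6} (hij : i ≠ j) (hik : i ≠ k) (hjk : j ≠ k) :
    AffineIndependent ℝ ![p i, p j, p k] := by
  classical
  obtain ⟨s, hs, hcard⟩ := Finset.exists_superset_card_eq (s := {i,j,k}) (n := 4)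
    (by
      have : ({i,j,k} : Finset (Fin 6)).card ≤ 3 := by
        apply le_trans (Finset.card_insert_le _ _)
        apply Nat.succ_le_succ
        apply le_trans (Finset.card_insert_le _ _)
        simp
      omega)
    (by simp)
  have h4 := hgen s hcard
  have hi : i ∈ s := hs (by simp)
  have hj : j ∈ s := hs (by simp)
  have hk : k ∈ s := hs (by simp)
  let e : Fin 3 ↪ ↥s :=
    ⟨![⟨i, hi⟩, ⟨j, hj⟩, ⟨k, hk⟩],
      inj3 (fun h => hij (congrArg Subtype.val h)) (fun h => hik (congrArg Subtype.val h))
        (fun h => hjk (congrArg Subtype.val h))⟩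
  have h3 := h4.comp_embedding e
  have he : ((fun m : ↥s => p ↑m) ∘ e) = ![p i, p j, p k] := by
    funext a
    fin_cases a <;> simp [e]
  rwa [he] at h3

lemma relint_finset
    (hgen : ∀ s : Finset (Fin 6), s.card = 4 → AffineIndependent ℝ (fun i : s => p i))
    {A : Finset (Fin 6)} (hA : A.card = 3) (x : Fin 3 → ℝ) :
    x ∈ intrinsicInterior ℝ (convexHull ℝ (p '' A)) ↔
      ∃ u : Fin 6 → ℝ, (∀ i ∈ A, 0 < u i) ∧ ∑ i ∈ A, u i = 1 ∧ ∑ i ∈ A, u i • p i = x := by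
  classical
  obtain ⟨a, b, c, hab, hac, hbc, rfl⟩ := Finset.card_eq_three.mp hA
  have himg : p '' (({a,b,c} : Finset (Fin 6)) : Set (Fin 6)) = {p a, p b, p c} := by
    simp [Set.image_insert_eq]
  rw [himg, relint_triangle (tri_indep hgen hab hac hbc)]
  constructor
  · rintro ⟨α, β, γ, hα, hβ, hγ, hsum, hcomb⟩
    refine ⟨fun i => if i = a then α else if i = b then β else γ, ?_, ?_, ?_⟩
    · intro i _
      dsimp only
      split_ifs <;> first | exact hα | exact hβ | exact hγ
    · rw [Finset.sum_insert (by simp [hab, hac]), Finset.sum_insert (by simp [hbc]),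
        Finset.sum_singleton]
      simp [Ne.symm hab, Ne.symm hac, Ne.symm hbc]
      linarith
    · rw [Finset.sum_insert (by simp [hab, hac]), Finset.sum_insert (by simp [hbc]),
        Finset.sum_singleton]
      simp only [if_pos rfl, if_neg (Ne.symm hab), if_neg (Ne.symm hac), if_neg (Ne.symm hbc),
        ite_true]
      rw [← hcomb]
      abel
  · rintro ⟨u, hupos, husum, hucomb⟩
    rw [Finset.sum_insert (by simp [hab, hac]), Finset.sum_insert (by simp [hbc]),
      Finset.sum_singleton] at husum hucomb
    refine ⟨u a, u b, u c, hupos a (by simp), hupos b (by simp), hupos c (by simp),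
      by linarith, by rw [← hucomb]; abel⟩

lemma cross_iff
    (hgen : ∀ s : Finset (Fin 6), s.card = 4 → AffineIndependent ℝ (fun i : s => p i))
    {A B : Finset (Fin 6)} (hA : A.card = 3) (hB : B.card = 3) (hAB : Disjoint A B) :
    (intrinsicInterior ℝ (convexHull ℝ (p '' A)) ∩
      intrinsicInterior ℝ (convexHull ℝ (p '' B))).Nonempty ↔
    ∃ w : Fin 6 → ℝ, Dep p w ∧ (∀ i ∈ A, 0 < w i) ∧ (∀ i ∈ B, w i < 0) := by
  classical
  have hunion : A ∪ B = Finset.univ := by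
    apply Finset.eq_univ_of_card
    rw [Finset.card_union_of_disjoint hAB, hA, hB]
    simp
  constructor
  · rintro ⟨x, hxA, hxB⟩
    rw [relint_finset hgen hA] at hxA
    rw [relint_finset hgen hB] at hxB
    obtain ⟨u, hu, hus, huc⟩ := hxA
    obtain ⟨v, hv, hvs, hvc⟩ := hxB
    have hnotA : ∀ i ∈ B, i ∉ A := fun i hi => Finset.disjoint_right.mp hAB hi
    refine ⟨fun i => if i ∈ A then u i else -v i, ⟨?_, ?_⟩, ?_, ?_⟩
    · rw [← hunion, Finset.sum_union hAB]
      have e1 : ∑ i ∈ A, (if i ∈ A then u i else -v i) = ∑ i ∈ A, u i :=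
        Finset.sum_congr rfl fun i hi => if_pos hi
      have e2 : ∑ i ∈ B, (if i ∈ A then u i else -v i) = ∑ i ∈ B, -v i :=
        Finset.sum_congr rfl fun i hi => if_neg (hnotA i hi)
      rw [e1, e2, hus, Finset.sum_neg_distrib, hvs]
      norm_num
    · rw [← hunion, Finset.sum_union hAB]
      have e1 : ∑ i ∈ A, (if i ∈ A then u i else -v i) • p i = ∑ i ∈ A, u i • p i :=
        Finset.sum_congr rfl fun i hi => by rw [if_pos hi]
      have e2 : ∑ i ∈ B, (if i ∈ A then u i else -v i) • p i = ∑ i ∈ B, -(v i • p i) :=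
        Finset.sum_congr rfl fun i hi => by rw [if_neg (hnotA i hi), neg_smul]
      rw [e1, e2, huc, Finset.sum_neg_distrib, hvc]
      abel
    · intro i hi
      simpa [if_pos hi] using hu i hi
    · intro i hi
      have := hv i hi
      simp only [if_neg (hnotA i hi)]
      linarith
  · rintro ⟨w, ⟨hws, hwc⟩, hwA, hwB⟩
    have hAne : A.Nonempty := by
      rw [← Finset.card_pos, hA]; norm_num
    have hsA : 0 < ∑ i ∈ A, w i := Finset.sum_pos (fun i hi => hwA i hi) hAne
    set S := ∑ i ∈ A, w i with hS
    have hsplit : ∑ i ∈ A, w i + ∑ i ∈ B, w i = 0 := by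
      rw [← Finset.sum_union hAB, hunion]
      exact hws
    have hvsplit : ∑ i ∈ A, w i • p i + ∑ i ∈ B, w i • p i = 0 := by
      rw [← Finset.sum_union hAB, hunion]
      exact hwc
    refine ⟨S⁻¹ • ∑ i ∈ A, w i • p i, ?_, ?_⟩
    · rw [relint_finset hgen hA]
      refine ⟨fun i => S⁻¹ * w i, fun i hi => mul_pos (inv_pos.mpr hsA) (hwA i hi), ?_, ?_⟩
      · rw [← Finset.mul_sum, ← hS, inv_mul_cancel₀ (ne_of_gt hsA)]
      · rw [Finset.smul_sum]
        exact Finset.sum_congr rfl fun i _ => by simp [mul_smul]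
    · rw [relint_finset hgen hB]
      refine ⟨fun i => -(S⁻¹ * w i), fun i hi => ?_, ?_, ?_⟩
      · have h1 : S⁻¹ * w i < 0 := mul_neg_of_pos_of_neg (inv_pos.mpr hsA) (hwB i hi)
        linarith
      · rw [Finset.sum_neg_distrib, ← Finset.mul_sum]
        have hBS : ∑ i ∈ B, w i = -S := by linarith
        rw [hBS]
        field_simp
      · have hBv : ∑ i ∈ B, w i • p i = -∑ i ∈ A, w i • p i := by
          have := hvsplit
          linear_combination (norm := abel) this
        calc ∑ i ∈ B, -(S⁻¹ * w i) • p i = -(S⁻¹ • ∑ i ∈ B, w i • p i) := by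
              rw [Finset.smul_sum, ← Finset.sum_neg_distrib]
              exact Finset.sum_congr rfl fun i _ => by simp [mul_smul]
            _ = S⁻¹ • ∑ i ∈ A, w i • p i := by rw [hBv, smul_neg, neg_neg]







lemma dep_eq_zero_of_two_zeros
    (hgen : ∀ s : Finset (Fin 6), s.card = 4 → AffineIndependent ℝ (fun i : s => p i))
    {w : Fin 6 → ℝ} (hw : Dep p w) {i j : Fin 6} (hij : i ≠ j)
    (hi : w i = 0) (hj : w j = 0) : w = 0 := by
  classical
  set s : Finset (Fin 6) := Finset.univ \ {i, j} with hs
  have hcard : s.card = 4 := by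
    rw [hs, Finset.card_sdiff_of_subset (Finset.subset_univ _),
      Finset.card_insert_of_notMem (by simpa using hij), Finset.card_singleton]
    simp
  have h4 := hgen s hcard
  rw [affineIndependent_iff] at h4
  have hsum : ∑ k ∈ s, w k = 0 := by
    have h1 : ∑ k ∈ s, w k = ∑ k, w k - (w i + w j) := by
      rw [hs, Finset.sum_sdiff_eq_sub (Finset.subset_univ _), Finset.sum_pair hij]
    rw [h1, hw.1, hi, hj]
    ring
  have hcomb : ∑ k ∈ s, w k • p k = 0 := by
    have h1 : ∑ k ∈ s, w k • p k = ∑ k, w k • p k - (w i • p i + w j • p j) := by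
      rw [hs, Finset.sum_sdiff_eq_sub (Finset.subset_univ _), Finset.sum_pair hij]
    rw [h1, hw.2, hi, hj]
    simp
  have key := h4 Finset.univ (fun k : ↥s => w ↑k) ?_ ?_
  · funext k
    by_cases hk : k ∈ s
    · exact key ⟨k, hk⟩ (Finset.mem_univ _)
    · rw [hs] at hk
      simp only [Finset.mem_sdiff, Finset.mem_univ, true_and, not_not] at hk
      simp only [Finset.mem_insert, Finset.mem_singleton] at hk
      rcases hk with rfl | rfl
      · simpa using hi
      · simpa using hj
  · rw [← hsum]
    exact Finset.sum_coe_sort s w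
  · rw [← hcomb]
    exact Finset.sum_coe_sort s (fun k => w k • p k)

lemma not_single_neg
    (hconv : ∀ i : Fin 6, p i ∉ convexHull ℝ {x : Fin 3 → ℝ | ∃ j ≠ i, x = p j})
    {w : Fin 6 → ℝ} (hw : Dep p w) {i : Fin 6} (hneg : w i < 0)
    (hpos : ∀ j, j ≠ i → 0 < w j) : False := by
  classical
  apply hconv i
  have hsum : ∑ j ∈ Finset.univ.erase i, w j = -w i := by
    have h1 := hw.1
    rw [← Finset.add_sum_erase _ _ (Finset.mem_univ i)] at h1
    linarith
  have hcm : (Finset.univ.erase i).centerMass w p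
      ∈ convexHull ℝ {x : Fin 3 → ℝ | ∃ j ≠ i, x = p j} := by
    apply Finset.centerMass_mem_convexHull
    · intro j hj
      exact (hpos j (Finset.ne_of_mem_erase hj)).le
    · rw [hsum]
      linarith
    · intro j hj
      exact ⟨j, Finset.ne_of_mem_erase hj, rfl⟩
  have hvec : ∑ j ∈ Finset.univ.erase i, w j • p j = -(w i • p i) := by
    have h1 := hw.2
    rw [← Finset.add_sum_erase _ _ (Finset.mem_univ i)] at h1
    exact eq_neg_of_add_eq_zero_right h1
  have hfin : (Finset.univ.erase i).centerMass w p = p i := by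
    rw [Finset.centerMass, hsum, hvec, ← neg_smul, smul_smul,
      inv_mul_cancel₀ (by linarith), one_smul]
  rwa [hfin] at hcm

lemma dep_neg {w : Fin 6 → ℝ} (hw : Dep p w) : Dep p (-w) := by
  refine ⟨?_, ?_⟩
  · simpa [Finset.sum_neg_distrib] using hw.1
  · have : ∑ i, (-w) i • p i = -∑ i, w i • p i := by
      rw [← Finset.sum_neg_distrib]
      exact Finset.sum_congr rfl fun i _ => by simp
    rw [this, hw.2, neg_zero]

lemma negcnt_ge_two
    (hconv : ∀ i : Fin 6, p i ∉ convexHull ℝ {x : Fin 3 → ℝ | ∃ j ≠ i, x = p j})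
    {w : Fin 6 → ℝ} (hw : Dep p w) (hfs : ∀ i, w i ≠ 0) :
    2 ≤ (Finset.univ.filter fun i => w i < 0).card := by
  classical
  by_contra hlt
  push_neg at hlt
  have hcases : (Finset.univ.filter fun i => w i < 0).card = 0
      ∨ (Finset.univ.filter fun i => w i < 0).card = 1 := by omega
  rcases hcases with h0 | h1
  · rw [Finset.card_eq_zero] at h0
    have hall : ∀ i, 0 < w i := by
      intro i
      rcases (hfs i).lt_or_gt with hlt' | hgt
      · exfalso
        have : i ∈ Finset.univ.filter fun i => w i < 0 :=
          Finset.mem_filter.mpr ⟨Finset.mem_univ _, hlt'⟩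
        rw [h0] at this
        simp at this
      · exact hgt
    have hpos : 0 < ∑ i, w i := Finset.sum_pos (fun i _ => hall i) Finset.univ_nonempty
    rw [hw.1] at hpos
    exact lt_irrefl _ hpos
  · obtain ⟨i, hi⟩ := Finset.card_eq_one.mp h1
    have hineg : w i < 0 := by
      have : i ∈ Finset.univ.filter fun i => w i < 0 := by
        rw [hi]; exact Finset.mem_singleton_self i
      exact (Finset.mem_filter.mp this).2
    have hpos : ∀ j, j ≠ i → 0 < w j := by
      intro j hj
      rcases (hfs j).lt_or_gt with h' | h'
      · exfalso
        have : j ∈ Finset.univ.filter fun i => w i < 0 :=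
          Finset.mem_filter.mpr ⟨Finset.mem_univ _, h'⟩
        rw [hi] at this
        exact hj (Finset.mem_singleton.mp this)
      · exact h'
    exact not_single_neg hconv hw hineg hpos

lemma poscnt_add_negcnt {w : Fin 6 → ℝ} (hfs : ∀ i, w i ≠ 0) :
    (Finset.univ.filter fun i => 0 < w i).card
      + (Finset.univ.filter fun i => w i < 0).card = 6 := by
  classical
  have h := Finset.card_filter_add_card_filter_not
    (s := (Finset.univ : Finset (Fin 6))) (p := fun i => 0 < w i)
  have heq : (Finset.univ.filter fun i => ¬ 0 < w i)
      = Finset.univ.filter fun i => w i < 0 := by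
    ext i
    simp only [Finset.mem_filter, Finset.mem_univ, true_and]
    exact ⟨fun h' => (hfs i).lt_or_gt.resolve_right h', fun h' => not_lt.mpr h'.le⟩
  rw [heq] at h
  simpa using h

lemma negcnt_bounds
    (hconv : ∀ i : Fin 6, p i ∉ convexHull ℝ {x : Fin 3 → ℝ | ∃ j ≠ i, x = p j})
    {w : Fin 6 → ℝ} (hw : Dep p w) (hfs : ∀ i, w i ≠ 0) :
    2 ≤ (Finset.univ.filter fun i => w i < 0).card
      ∧ (Finset.univ.filter fun i => w i < 0).card ≤ 4 := by
  classical
  refine ⟨negcnt_ge_two hconv hw hfs, ?_⟩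
  have h2 := negcnt_ge_two hconv (dep_neg hw) (fun i => neg_ne_zero.mpr (hfs i))
  have hcompl : (Finset.univ.filter fun i => (-w) i < 0)
      = Finset.univ.filter fun i => 0 < w i := by
    ext i
    simp
  rw [hcompl] at h2
  have h3 := poscnt_add_negcnt hfs
  omega

set_option maxHeartbeats 1000000 in
set_option synthInstance.maxHeartbeats 400000 in
lemma exists_dep_basis
    (hgen : ∀ s : Finset (Fin 6), s.card = 4 → AffineIndependent ℝ (fun i : s => p i)) :
    ∃ w0 w1 : Fin 6 → ℝ, Dep p w0 ∧ Dep p w1 ∧ (∀ i, w0 i ≠ 0) ∧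
      (∀ w, Dep p w → ∃ s t : ℝ, w = s • w0 + t • w1) ∧
      (∀ s t : ℝ, s • w0 + t • w1 = 0 → s = 0 ∧ t = 0) := by
  classical
  set L : (Fin 6 → ℝ) →ₗ[ℝ] ℝ × (Fin 3 → ℝ) :=
    { toFun := fun w => (∑ i, w i, ∑ i, w i • p i),
      map_add' := by
        intro x y
        simp [Finset.sum_add_distrib, add_smul, Prod.ext_iff]
      map_smul' := by
        intro c x
        simp [Prod.ext_iff, Finset.mul_sum, Finset.smul_sum, mul_smul] } with hL
  have hker : ∀ w, Dep p w ↔ w ∈ LinearMap.ker L := by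
    intro w
    simp [Dep, hL, LinearMap.mem_ker, Prod.ext_iff]
  have hsurj : LinearMap.range L = ⊤ := by
    set s0 : Finset (Fin 6) := {0, 1, 2, 3} with hs0
    have hs0card : s0.card = 4 := by decide
    have h4 := hgen s0 hs0card
    rw [affineIndependent_iff] at h4
    have hli : LinearIndependent ℝ (fun i : ↥s0 => ((1 : ℝ), p ↑i)) := by
      rw [Fintype.linearIndependent_iff]
      intro g hg
      have h1 : ∑ i : ↥s0, g i = 0 := by
        have := congrArg Prod.fst hg
        simpa [Prod.fst_sum] using this
      have h2 : ∑ i : ↥s0, g i • p ↑i = 0 := by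
        have := congrArg Prod.snd hg
        simpa [Prod.snd_sum] using this
      exact fun i => h4 Finset.univ g h1 h2 i (Finset.mem_univ i)
    have hspan_le : Submodule.span ℝ (Set.range (fun i : ↥s0 => ((1:ℝ), p ↑i)))
        ≤ LinearMap.range L := by
      rw [Submodule.span_le]
      rintro _ ⟨i, rfl⟩
      refine ⟨(fun j => if j = (i : Fin 6) then (1:ℝ) else 0), ?_⟩
      have e1 : ∑ j, (if j = (i : Fin 6) then (1:ℝ) else 0) = 1 := by
        simp
      have e2 : ∑ j, (if j = (i : Fin 6) then (1:ℝ) else 0) • p j = p ↑i := by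
        rw [Finset.sum_eq_single (i : Fin 6)]
        · simp
        · intro j _ hj
          simp [hj]
        · simp
      simp [hL, e1, e2, Prod.ext_iff]
    have htop : Submodule.span ℝ (Set.range fun i : ↥s0 => ((1:ℝ), p ↑i)) = ⊤ := by
      apply Submodule.eq_top_of_finrank_eq
      rw [finrank_span_eq_card hli]
      simp [hs0card]
    rw [← top_le_iff, ← htop]
    exact hspan_le
  have h6 : Module.finrank ℝ (Fin 6 → ℝ) = 6 := by simp
  have h4' : Module.finrank ℝ (ℝ × (Fin 3 → ℝ)) = 4 := by simp
  have hrank : Module.finrank ℝ ↥(LinearMap.ker L) = 2 := by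
    have hh := LinearMap.finrank_range_add_finrank_ker L
    rw [hsurj, finrank_top, h6, h4'] at hh
    omega
  have hWi : ∀ i : Fin 6, ∃ w ∈ LinearMap.ker L, w i ≠ 0 := by
    intro i
    by_contra hno
    push_neg at hno
    set j : Fin 6 := if i = 0 then 1 else 0 with hj
    have hij : i ≠ j := by
      rw [hj]
      split_ifs with h
      · rw [h]; decide
      · exact h
    set φ : ↥(LinearMap.ker L) →ₗ[ℝ] ℝ :=
      { toFun := fun w => (w : Fin 6 → ℝ) j,
        map_add' := by intros; rfl,
        map_smul' := by intros; rfl } with hφ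
    have hφker : 0 < Module.finrank ℝ ↥(LinearMap.ker φ) := by
      have hh := LinearMap.finrank_range_add_finrank_ker φ
      have hr : Module.finrank ℝ ↥(LinearMap.range φ) ≤ 1 := by
        have := Submodule.finrank_le (LinearMap.range φ)
        simpa using this
      rw [hrank] at hh
      omega
    haveI : Nontrivial ↥(LinearMap.ker φ) := Module.finrank_pos_iff.mp hφker
    obtain ⟨v, hvne⟩ := exists_ne (0 : ↥(LinearMap.ker φ))
    set w : Fin 6 → ℝ := ((v : ↥(LinearMap.ker L)) : Fin 6 → ℝ) with hwdef
    have hwi : w i = 0 := hno _ (v : ↥(LinearMap.ker L)).2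
    have hwj : w j = 0 := by
      have hmem' : φ ↑v = 0 := LinearMap.mem_ker.mp v.2
      exact hmem'
    have hwdep : Dep p w := (hker w).mpr (v : ↥(LinearMap.ker L)).2
    have hw0 : w = 0 := dep_eq_zero_of_two_zeros hgen hwdep hij hwi hwj
    exact hvne (Subtype.ext (Subtype.ext hw0))
  set bV := Module.finBasisOfFinrankEq ℝ ↥(LinearMap.ker L) hrank with hbV
  set u : Fin 6 → ℝ := ((bV 0 : ↥(LinearMap.ker L)) : Fin 6 → ℝ) with hu
  set v : Fin 6 → ℝ := ((bV 1 : ↥(LinearMap.ker L)) : Fin 6 → ℝ) with hv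
  have humem : u ∈ LinearMap.ker L := (bV 0).2
  have hvmem : v ∈ LinearMap.ker L := (bV 1).2
  have hspanuv : ∀ w, Dep p w → ∃ s t : ℝ, w = s • u + t • v := by
    intro w hw
    have hmem : w ∈ LinearMap.ker L := (hker w).mp hw
    set wk : ↥(LinearMap.ker L) := ⟨w, hmem⟩ with hwk
    have hrepr := bV.sum_repr wk
    rw [Fin.sum_univ_two] at hrepr
    refine ⟨bV.repr wk 0, bV.repr wk 1, ?_⟩
    have := congrArg Subtype.val hrepr
    simpa [hu, hv] using this.symm
  have hindep_uv : ∀ s t : ℝ, s • u + t • v = 0 → s = 0 ∧ t = 0 := by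
    intro s t hst
    have h0 : s • bV 0 + t • bV 1 = 0 := by
      apply Subtype.ext
      simpa [hu, hv] using hst
    have hli := bV.linearIndependent
    rw [Fintype.linearIndependent_iff] at hli
    have hz := hli ![s, t] (by rw [Fin.sum_univ_two]; simpa using h0)
    exact ⟨hz 0, hz 1⟩
  have hZ : ∀ i : Fin 6, ({r : ℝ | u i + r * v i = 0}).Subsingleton := by
    intro i r hr r' hr'
    simp only [Set.mem_setOf_eq] at hr hr'
    by_contra hne
    have hvi : v i = 0 := by
      have hmul : (r - r') * v i = 0 := by linarith [hr, hr']
      rcases mul_eq_zero.mp hmul with h | h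
      · exact absurd (sub_eq_zero.mp h) hne
      · exact h
    have hui : u i = 0 := by
      rw [hvi] at hr
      linarith
    obtain ⟨w, hwk, hwi⟩ := hWi i
    obtain ⟨s, t, rfl⟩ := hspanuv w ((hker w).mpr hwk)
    apply hwi
    simp [hui, hvi]
  have hZfin : (⋃ i : Fin 6, {r : ℝ | u i + r * v i = 0}).Finite :=
    Set.finite_iUnion fun i => (hZ i).finite
  obtain ⟨r, hr⟩ := hZfin.infinite_compl.nonempty
  set w0 : Fin 6 → ℝ := u + r • v with hw0
  have hw0dep : Dep p w0 :=
    (hker w0).mpr ((LinearMap.ker L).add_mem humem ((LinearMap.ker L).smul_mem r hvmem))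
  have hw0fs : ∀ i, w0 i ≠ 0 := by
    intro i h0
    apply hr
    refine Set.mem_iUnion.mpr ⟨i, ?_⟩
    simp only [Set.mem_setOf_eq]
    have : u i + r * v i = w0 i := by simp [hw0, mul_comm]
    rw [this, h0]
  refine ⟨w0, v, hw0dep, (hker v).mpr hvmem, hw0fs, ?_, ?_⟩
  · intro w hw
    obtain ⟨s, t, rfl⟩ := hspanuv w hw
    refine ⟨s, t - s * r, ?_⟩
    rw [hw0]
    ext i
    simp
    ring
  · intro s t hst
    have hcomb : s • u + (s * r + t) • v = 0 := by
      rw [← hst, hw0]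
      ext i
      simp
      ring
    obtain ⟨hs, hst'⟩ := hindep_uv _ _ hcomb
    refine ⟨hs, ?_⟩
    rw [hs] at hst'
    simpa using hst'












lemma dep_smul (c : ℝ) {w : Fin 6 → ℝ} (hw : Dep p w) : Dep p (c • w) := by
  constructor
  · have h : ∑ i, (c • w) i = c * ∑ i, w i := by
      rw [Finset.mul_sum]
      exact Finset.sum_congr rfl fun i _ => by simp
    rw [h, hw.1, mul_zero]
  · have h : ∑ i, (c • w) i • p i = c • ∑ i, w i • p i := by
      rw [Finset.smul_sum]
      exact Finset.sum_congr rfl fun i _ => by simp [mul_smul]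
    rw [h, hw.2, smul_zero]

lemma dep_sub {w w' : Fin 6 → ℝ} (hw : Dep p w) (hw' : Dep p w') : Dep p (w - w') := by
  constructor
  · have h : ∑ i, (w - w') i = ∑ i, w i - ∑ i, w' i := by
      rw [← Finset.sum_sub_distrib]
      rfl
    rw [h, hw.1, hw'.1, sub_zero]
  · have h : ∑ i, (w - w') i • p i = ∑ i, w i • p i - ∑ i, w' i • p i := by
      rw [← Finset.sum_sub_distrib]
      exact Finset.sum_congr rfl fun i _ => by simp [sub_smul]
    rw [h, hw.2, hw'.2, sub_zero]

/-- positive scalar preserves signs -/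
lemma posfac (a u : ℝ) (ha : 0 < a) : (0 < a * u ↔ 0 < u) ∧ (a * u < 0 ↔ u < 0) := by
  constructor
  · constructor
    · intro h
      nlinarith
    · intro h
      exact mul_pos ha h
  · constructor
    · intro h
      nlinarith
    · intro h
      exact mul_neg_of_pos_of_neg ha h

/-- negative scalar flips signs -/
lemma negfac (a u : ℝ) (ha : a < 0) : (0 < a * u ↔ u < 0) ∧ (a * u < 0 ↔ 0 < u) := by
  constructor
  · constructor
    · intro h
      nlinarith
    · intro h
      exact mul_pos_of_neg_of_neg ha h
  · constructor
    · intro h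
      nlinarith
    · intro h
      exact mul_neg_of_neg_of_pos ha h

lemma mem_iff_lt_card_of_downclosed (S : Finset (Fin 6))
    (hdc : ∀ j j' : Fin 6, j' ≤ j → j ∈ S → j' ∈ S) (j : Fin 6) :
    j ∈ S ↔ (j : ℕ) < S.card := by
  constructor
  · intro hj
    have hsub : Finset.Iic j ⊆ S := fun j' hj' => hdc j j' (Finset.mem_Iic.mp hj') hj
    have hc := Finset.card_le_card hsub
    have hIic : (Finset.Iic j).card = (j : ℕ) + 1 := by simp
    omega
  · intro hj
    by_contra hjS
    have hsub : S ⊆ Finset.Iio j := by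
      intro j' hj'
      rw [Finset.mem_Iio]
      by_contra h'
      push_neg at h'
      exact hjS (hdc j' j h' hj')
    have hc := Finset.card_le_card hsub
    have hIio : (Finset.Iio j).card = (j : ℕ) := by simp
    omega

lemma count3 {n : ℕ → ℕ} (halt : ∀ k < 6, (n k = 3 ↔ ¬ n (k+1) = 3)) :
    (Finset.univ.filter fun k : Fin 6 => n (k : ℕ) = 3).card = 3 := by
  classical
  have a0 := halt 0 (by norm_num)
  have a1 := halt 1 (by norm_num)
  have a2 := halt 2 (by norm_num)
  have a3 := halt 3 (by norm_num)
  have a4 := halt 4 (by norm_num)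
  by_cases h0 : n 0 = 3
  · have h1 : ¬ n 1 = 3 := by tauto
    have h2 : n 2 = 3 := by tauto
    have h3 : ¬ n 3 = 3 := by tauto
    have h4 : n 4 = 3 := by tauto
    have h5 : ¬ n 5 = 3 := by tauto
    have he : (Finset.univ.filter fun k : Fin 6 => n (k : ℕ) = 3)
        = ({0, 2, 4} : Finset (Fin 6)) := by
      ext k
      fin_cases k <;> norm_num [Fin.ext_iff, h0, h1, h2, h3, h4, h5] <;> decide
    rw [he]
    decide
  · have h1 : n 1 = 3 := by tauto
    have h2 : ¬ n 2 = 3 := by tauto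
    have h3 : n 3 = 3 := by tauto
    have h4 : ¬ n 4 = 3 := by tauto
    have h5 : n 5 = 3 := by tauto
    have he : (Finset.univ.filter fun k : Fin 6 => n (k : ℕ) = 3)
        = ({1, 3, 5} : Finset (Fin 6)) := by
      ext k
      fin_cases k <;> norm_num [Fin.ext_iff, h0, h1, h2, h3, h4, h5] <;> decide
    rw [he]
    decide

lemma samesign {a a' : ℝ} (ha : a ≠ 0) (ha' : a' ≠ 0) (h : 0 < a ↔ 0 < a') (u : ℝ) :
    (a * u < 0 ↔ a' * u < 0) ∧ (0 < a * u ↔ 0 < a' * u) := by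
  have hneg : a < 0 ↔ a' < 0 := by
    constructor
    · intro hh
      rcases ha'.lt_or_gt with h2 | h2
      · exact h2
      · exact absurd (h.mpr h2) (not_lt.mpr hh.le)
    · intro hh
      rcases ha.lt_or_gt with h2 | h2
      · exact h2
      · exact absurd (h.mp h2) (not_lt.mpr hh.le)
  constructor
  · rw [mul_neg_iff, mul_neg_iff]
    tauto
  · rw [mul_pos_iff, mul_pos_iff]
    tauto


end K36

open K36

set_option maxHeartbeats 1600000 in
/-- Six points in convex and general position in ℝ³ span exactly 3 crossing pairs of
vertex-disjoint triangles. -/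
theorem convex_crossing_K36 (p : Fin 6 → Fin 3 → ℝ)
    (hgen : ∀ s : Finset (Fin 6), s.card = 4 → AffineIndependent ℝ (fun i : s => p i))
    (hconv : ∀ i : Fin 6, p i ∉ convexHull ℝ {x : Fin 3 → ℝ | ∃ j ≠ i, x = p j}) :
    Set.ncard {q : Sym2 (Finset (Fin 6)) | ∃ A B : Finset (Fin 6), q = s(A, B) ∧
      A.card = 3 ∧ B.card = 3 ∧ Disjoint A B ∧
      (intrinsicInterior ℝ (convexHull ℝ (p '' A)) ∩
       intrinsicInterior ℝ (convexHull ℝ (p '' B))).Nonempty} = 3 := by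
  classical
  obtain ⟨w0, w1, hw0dep, hw1dep, hw0fs, hspan, hindep⟩ := exists_dep_basis hgen
  set tt : Fin 6 → ℝ := fun i => w1 i / w0 i with htt
  have httmul : ∀ i, w1 i = tt i * w0 i := fun i =>
    (div_mul_cancel₀ (w1 i) (hw0fs i)).symm
  have httinj : Function.Injective tt := by
    intro i j hij
    by_contra hne
    have hdep : Dep p (w1 i • w0 - w0 i • w1) :=
      dep_sub (dep_smul _ hw0dep) (dep_smul _ hw1dep)
    have hvi : (w1 i • w0 - w0 i • w1) i = 0 := by
      simp only [Pi.sub_apply, Pi.smul_apply, smul_eq_mul]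
      ring
    have hvj : (w1 i • w0 - w0 i • w1) j = 0 := by
      simp only [Pi.sub_apply, Pi.smul_apply, smul_eq_mul]
      rw [httmul j, ← hij, httmul i]
      ring
    have h0 := dep_eq_zero_of_two_zeros hgen hdep hne hvi hvj
    have hcomb : w1 i • w0 + (-(w0 i)) • w1 = 0 := by
      rw [← h0]
      ext a
      simp
      ring
    obtain ⟨h1, h2⟩ := hindep _ _ hcomb
    exact hw0fs i (neg_eq_zero.mp h2)
  set T6 : Finset ℝ := Finset.univ.image tt with hT6
  have hT6card : T6.card = 6 := by
    rw [hT6, Finset.card_image_of_injective _ httinj]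
    simp
  set mo := T6.orderIsoOfFin hT6card with hmo
  set m : Fin 6 → ℝ := fun j => (mo j : ℝ) with hm
  have hmlt : ∀ j j' : Fin 6, j < j' → m j < m j' := by
    intro j j' h
    exact Subtype.coe_lt_coe.mpr (mo.lt_iff_lt.mpr h)
  have hmle : ∀ j j' : Fin 6, j ≤ j' → m j ≤ m j' := by
    intro j j' h
    rcases eq_or_lt_of_le h with rfl | h'
    · exact le_refl _
    · exact (hmlt _ _ h').le
  set pos : Fin 6 → Fin 6 :=
    (fun i => mo.symm ⟨tt i, by rw [hT6]; exact Finset.mem_image_of_mem tt (Finset.mem_univ i)⟩)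
    with hposdef
  have hposm : ∀ i, m (pos i) = tt i := by
    intro i
    rw [hm, hposdef]
    simp
  have hposinj : Function.Injective pos := by
    intro i j h
    apply httinj
    rw [← hposm i, ← hposm j, h]
  have hpossurj : Function.Surjective pos := Finite.surjective_of_injective hposinj
  set xk : ℕ → ℝ := (fun k =>
    if k = 0 then m 0 - 1
    else if k = 1 then (m 0 + m 1)/2
    else if k = 2 then (m 1 + m 2)/2
    else if k = 3 then (m 2 + m 3)/2
    else if k = 4 then (m 3 + m 4)/2
    else if k = 5 then (m 4 + m 5)/2
    else m 5 + 1) with hxk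
  have h01 : m 0 < m 1 := hmlt _ _ (by decide)
  have h12 : m 1 < m 2 := hmlt _ _ (by decide)
  have h23 : m 2 < m 3 := hmlt _ _ (by decide)
  have h34 : m 3 < m 4 := hmlt _ _ (by decide)
  have h45 : m 4 < m 5 := hmlt _ _ (by decide)
  have x0 : xk 0 = m 0 - 1 := rfl
  have x1 : xk 1 = (m 0 + m 1)/2 := rfl
  have x2 : xk 2 = (m 1 + m 2)/2 := rfl
  have x3 : xk 3 = (m 2 + m 3)/2 := rfl
  have x4 : xk 4 = (m 3 + m 4)/2 := rfl
  have x5 : xk 5 = (m 4 + m 5)/2 := rfl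
  have x6 : xk 6 = m 5 + 1 := rfl
  have e0 : m ⟨0, by norm_num⟩ = m 0 := rfl
  have e1 : m ⟨1, by norm_num⟩ = m 1 := rfl
  have e2 : m ⟨2, by norm_num⟩ = m 2 := rfl
  have e3 : m ⟨3, by norm_num⟩ = m 3 := rfl
  have e4 : m ⟨4, by norm_num⟩ = m 4 := rfl
  have e5 : m ⟨5, by norm_num⟩ = m 5 := rfl
  have P1 : ∀ k ≤ 6, ∀ j : Fin 6, m j < xk k ↔ (j : ℕ) < k := by
    intro k hk j
    interval_cases k <;> fin_cases j <;>
      simp only [x0, x1, x2, x3, x4, x5, x6, e0, e1, e2, e3, e4, e5] <;> norm_num <;> linarith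
  have P2 : ∀ k ≤ 6, ∀ j : Fin 6, xk k < m j ↔ k ≤ (j : ℕ) := by
    intro k hk j
    interval_cases k <;> fin_cases j <;>
      simp only [x0, x1, x2, x3, x4, x5, x6, e0, e1, e2, e3, e4, e5] <;> norm_num <;> linarith
  have Q1 : ∀ k ≤ 6, ∀ i : Fin 6, tt i < xk k ↔ ((pos i : ℕ) < k) := by
    intro k hk i
    rw [← hposm i]
    exact P1 k hk (pos i)
  have Q2 : ∀ k ≤ 6, ∀ i : Fin 6, xk k < tt i ↔ (k ≤ (pos i : ℕ)) := by
    intro k hk i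
    rw [← hposm i]
    exact P2 k hk (pos i)
  set W : ℕ → Fin 6 → ℝ := (fun k => w1 - xk k • w0) with hW
  have hWdep : ∀ k, Dep p (W k) := fun k => dep_sub hw1dep (dep_smul _ hw0dep)
  have hWval : ∀ k i, W k i = (tt i - xk k) * w0 i := by
    intro k i
    simp only [hW, Pi.sub_apply, Pi.smul_apply, smul_eq_mul]
    rw [httmul i]
    ring
  have hWfs : ∀ k ≤ 6, ∀ i, W k i ≠ 0 := by
    intro k hk i
    rw [hWval]
    apply mul_ne_zero _ (hw0fs i)
    intro h0
    have heq : tt i = xk k := by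
      have := sub_eq_zero.mp h0
      linarith
    have hn1 : ¬ ((pos i : ℕ) < k) := by
      rw [← Q1 k hk i]
      simp [heq]
    have hn2 : ¬ (k ≤ (pos i : ℕ)) := by
      rw [← Q2 k hk i]
      simp [heq]
    omega
  set N : ℕ → ℕ := (fun k => (Finset.univ.filter fun i => W k i < 0).card) with hN
  have hbounds : ∀ k ≤ 6, 2 ≤ N k ∧ N k ≤ 4 := fun k hk =>
    negcnt_bounds hconv (hWdep k) (hWfs k hk)
  have hstep : ∀ k < 6, N (k+1) = N k + 1 ∨ N k = N (k+1) + 1 := by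
    intro k hk
    obtain ⟨istar, histar⟩ := hpossurj ⟨k, hk⟩
    have hkv : (pos istar : ℕ) = k := by rw [histar]
    have hstar1 : 0 < tt istar - xk k := by
      rw [sub_pos]
      exact (Q2 k (by omega) istar).mpr (by omega)
    have hstar2 : tt istar - xk (k+1) < 0 := by
      rw [sub_neg]
      exact (Q1 (k+1) (by omega) istar).mpr (by omega)
    have hoff : ∀ i, i ≠ istar → (W k i < 0 ↔ W (k+1) i < 0) := by
      intro i hi
      have hik : (pos i : ℕ) ≠ k := by
        intro h
        apply hi
        apply hposinj
        rw [histar]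
        exact Fin.ext h
      have hiff : (tt i < xk k) ↔ (tt i < xk (k+1)) := by
        rw [Q1 k (by omega) i, Q1 (k+1) (by omega) i]
        omega
      have ha : tt i - xk k ≠ 0 := by
        intro h
        exact hWfs k (by omega) i (by rw [hWval, h, zero_mul])
      have ha' : tt i - xk (k+1) ≠ 0 := by
        intro h
        exact hWfs (k+1) (by omega) i (by rw [hWval, h, zero_mul])
      have hne1 : tt i ≠ xk k := fun h => ha (by rw [h]; ring)
      have hne2 : tt i ≠ xk (k+1) := fun h => ha' (by rw [h]; ring)
      have hsgn : 0 < tt i - xk k ↔ 0 < tt i - xk (k+1) := by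
        rw [sub_pos, sub_pos]
        constructor
        · intro h
          rcases lt_trichotomy (tt i) (xk (k+1)) with h2 | h2 | h2
          · exact absurd (hiff.mpr h2) (by linarith)
          · exact absurd h2 hne2
          · exact h2
        · intro h
          rcases lt_trichotomy (tt i) (xk k) with h2 | h2 | h2
          · exact absurd (hiff.mp h2) (by linarith)
          · exact absurd h2 hne1
          · exact h2
      rw [hWval k i, hWval (k+1) i]
      exact (samesign ha ha' hsgn (w0 i)).1
    have herase : (Finset.univ.filter fun i => W k i < 0).erase istar
        = (Finset.univ.filter fun i => W (k+1) i < 0).erase istar := by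
      ext i
      simp only [Finset.mem_erase, Finset.mem_filter, Finset.mem_univ, true_and]
      constructor
      · rintro ⟨hne, hlt⟩
        exact ⟨hne, (hoff i hne).mp hlt⟩
      · rintro ⟨hne, hlt⟩
        exact ⟨hne, (hoff i hne).mpr hlt⟩
    have hcc := congrArg Finset.card herase
    have hN1 : N k = (Finset.univ.filter fun i => W k i < 0).card := rfl
    have hN2 : N (k+1) = (Finset.univ.filter fun i => W (k+1) i < 0).card := rfl
    rcases (hw0fs istar).lt_or_gt with hw0neg | hw0pos
    · have hin : istar ∈ Finset.univ.filter fun i => W k i < 0 := by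
        simp only [Finset.mem_filter, Finset.mem_univ, true_and]
        rw [hWval]
        exact mul_neg_of_pos_of_neg hstar1 hw0neg
      have hout : istar ∉ Finset.univ.filter fun i => W (k+1) i < 0 := by
        simp only [Finset.mem_filter, Finset.mem_univ, true_and]
        rw [hWval]
        exact not_lt.mpr (mul_pos_of_neg_of_neg hstar2 hw0neg).le
      have hc1 := Finset.card_erase_add_one hin
      have hc2 := Finset.erase_eq_of_notMem hout
      have hc2' := congrArg Finset.card hc2
      right
      omega
    · have hout : istar ∉ Finset.univ.filter fun i => W k i < 0 := by
        simp only [Finset.mem_filter, Finset.mem_univ, true_and]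
        rw [hWval]
        exact not_lt.mpr (mul_pos hstar1 hw0pos).le
      have hin : istar ∈ Finset.univ.filter fun i => W (k+1) i < 0 := by
        simp only [Finset.mem_filter, Finset.mem_univ, true_and]
        rw [hWval]
        exact mul_neg_of_neg_of_pos hstar2 hw0pos
      have hc1 := Finset.card_erase_add_one hin
      have hc2 := Finset.erase_eq_of_notMem hout
      have hc2' := congrArg Finset.card hc2
      left
      omega
  have halt : ∀ k < 6, (N k = 3 ↔ ¬ N (k+1) = 3) := by
    intro k hk
    have h1 := hstep k hk
    have b1 := hbounds k (by omega)
    have b2 := hbounds (k+1) (by omega)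
    omega
  set PA : ℕ → Finset (Fin 6) := (fun k => Finset.univ.filter fun i => 0 < W k i) with hPA
  set PB : ℕ → Finset (Fin 6) := (fun k => Finset.univ.filter fun i => W k i < 0) with hPB
  have hPBcard : ∀ k, (PB k).card = N k := fun k => rfl
  have hPAcard : ∀ k, k ≤ 6 → (PA k).card + N k = 6 := by
    intro k hk
    exact poscnt_add_negcnt (hWfs k hk)
  have hdisjP : ∀ k, Disjoint (PA k) (PB k) := by
    intro k
    rw [Finset.disjoint_left]
    intro i hi1 hi2
    simp only [hPA, Finset.mem_filter, Finset.mem_univ, true_and] at hi1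
    simp only [hPB, Finset.mem_filter, Finset.mem_univ, true_and] at hi2
    linarith
  have htotalP : ∀ k, k ≤ 6 → ∀ i, i ∈ PA k ∨ i ∈ PB k := by
    intro k hk i
    rcases (hWfs k hk i).lt_or_gt with h | h
    · right
      simp only [hPB, Finset.mem_filter, Finset.mem_univ, true_and]
      exact h
    · left
      simp only [hPA, Finset.mem_filter, Finset.mem_univ, true_and]
      exact h
  set K : Finset (Fin 6) := Finset.univ.filter (fun k : Fin 6 => N (k : ℕ) = 3) with hK
  set f : Fin 6 → Sym2 (Finset (Fin 6)) := (fun k => s(PA (k : ℕ), PB (k : ℕ))) with hf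
  -- flipping at the far arc
  have hflip : ∀ i, (0 < W 6 i ↔ W 0 i < 0) ∧ (W 6 i < 0 ↔ 0 < W 0 i) := by
    intro i
    have hpos6 : tt i - xk 6 < 0 := by
      rw [sub_neg]
      exact (Q1 6 (by omega) i).mpr (pos i).isLt
    have hpos0 : 0 < tt i - xk 0 := by
      rw [sub_pos]
      exact (Q2 0 (by omega) i).mpr (by omega)
    rw [hWval 6 i, hWval 0 i]
    constructor
    · rw [(negfac _ (w0 i) hpos6).1, (posfac _ (w0 i) hpos0).2]
    · rw [(negfac _ (w0 i) hpos6).2, (posfac _ (w0 i) hpos0).1]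
  -- main matching of crossing pairs with arcs
  have hmatch : ∀ (w : Fin 6 → ℝ) (A B : Finset (Fin 6)), Dep p w →
      A.card = 3 → B.card = 3 → Disjoint A B →
      (∀ i ∈ A, 0 < w i) → (∀ i ∈ B, w i < 0) →
      ∃ k : Fin 6, N (k : ℕ) = 3 ∧ s(A, B) = f k := by
    intro w A B hwdep hA hB hAB hwA hwB
    have hunion : A ∪ B = Finset.univ := by
      apply Finset.eq_univ_of_card
      rw [Finset.card_union_of_disjoint hAB, hA, hB]
      simp
    have hmem : ∀ i, i ∈ A ∨ i ∈ B := by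
      intro i
      have h : i ∈ A ∪ B := by rw [hunion]; exact Finset.mem_univ i
      exact Finset.mem_union.mp h
    have hwfs : ∀ i, w i ≠ 0 := by
      intro i
      rcases hmem i with h | h
      · exact (hwA i h).ne'
      · exact (hwB i h).ne
    have hAeq : ∀ v : Fin 6 → ℝ, (∀ i, (0 < w i ↔ 0 < v i)) → (∀ i, v i ≠ 0) →
        A = Finset.univ.filter (fun i => 0 < v i)
          ∧ B = Finset.univ.filter (fun i => v i < 0) := by
      intro v hv hvfs
      constructor
      · ext i
        simp only [Finset.mem_filter, Finset.mem_univ, true_and]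
        constructor
        · intro hi
          exact (hv i).mp (hwA i hi)
        · intro hi
          rcases hmem i with h | h
          · exact h
          · exact absurd ((hv i).mpr hi) (not_lt.mpr (hwB i h).le)
      · ext i
        simp only [Finset.mem_filter, Finset.mem_univ, true_and]
        constructor
        · intro hi
          rcases (hvfs i).lt_or_gt with h | h
          · exact h
          · exact absurd ((hv i).mpr h) (not_lt.mpr (hwB i hi).le)
        · intro hi
          rcases hmem i with h | h
          · exfalso
            have hcon := (hv i).mp (hwA i h)
            linarith
          · exact h
    have hAeq2 : ∀ v : Fin 6 → ℝ, (∀ i, (0 < w i ↔ v i < 0)) → (∀ i, v i ≠ 0) →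
        A = Finset.univ.filter (fun i => v i < 0)
          ∧ B = Finset.univ.filter (fun i => 0 < v i) := by
      intro v hv hvfs
      constructor
      · ext i
        simp only [Finset.mem_filter, Finset.mem_univ, true_and]
        constructor
        · intro hi
          exact (hv i).mp (hwA i hi)
        · intro hi
          rcases hmem i with h | h
          · exact h
          · exact absurd ((hv i).mpr hi) (not_lt.mpr (hwB i h).le)
      · ext i
        simp only [Finset.mem_filter, Finset.mem_univ, true_and]
        constructor
        · intro hi
          rcases (hvfs i).lt_or_gt with h | h
          · exact absurd ((hv i).mpr h) (not_lt.mpr (hwB i hi).le)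
          · exact h
        · intro hi
          rcases hmem i with h | h
          · exfalso
            have hcon := (hv i).mp (hwA i h)
            linarith
          · exact h
    obtain ⟨s, t, rfl⟩ := hspan w hwdep
    have hkey : ∃ k, k ≤ 6 ∧ ((∀ i, (0 < (s • w0 + t • w1) i ↔ 0 < W k i))
        ∨ (∀ i, (0 < (s • w0 + t • w1) i ↔ W k i < 0))) := by
      by_cases ht : t = 0
      · subst ht
        have hs : s ≠ 0 := by
          intro h0
          exact hwfs 0 (by simp [h0])
        have hW0 : ∀ i, 0 < tt i - xk 0 := by
          intro i
          rw [sub_pos]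
          exact (Q2 0 (by omega) i).mpr (by omega)
        refine ⟨0, by omega, ?_⟩
        rcases hs.lt_or_gt with hneg | hpos
        · right
          intro i
          have hv : (s • w0 + (0:ℝ) • w1) i = s * w0 i := by simp
          rw [hv, hWval 0 i, (negfac s (w0 i) hneg).1, (posfac _ (w0 i) (hW0 i)).2]
        · left
          intro i
          have hv : (s • w0 + (0:ℝ) • w1) i = s * w0 i := by simp
          rw [hv, hWval 0 i, (posfac s (w0 i) hpos).1, (posfac _ (w0 i) (hW0 i)).1]
      · set x : ℝ := -s/t with hx
        have hwformula : ∀ i, (s • w0 + t • w1) i = t * ((tt i - x) * w0 i) := by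
          intro i
          simp only [Pi.add_apply, Pi.smul_apply, smul_eq_mul]
          rw [httmul i, hx]
          field_simp
          ring
        have hxne : ∀ i, tt i - x ≠ 0 := by
          intro i h0
          apply hwfs i
          rw [hwformula i, h0, zero_mul, mul_zero]
        set S : Finset (Fin 6) := Finset.univ.filter (fun j => m j < x) with hS
        have hdc : ∀ j j' : Fin 6, j' ≤ j → j ∈ S → j' ∈ S := by
          intro j j' hle hj
          simp only [hS, Finset.mem_filter, Finset.mem_univ, true_and] at hj ⊢
          exact lt_of_le_of_lt (hmle j' j hle) hj
        have hcard6 : S.card ≤ 6 := by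
          apply le_trans (Finset.card_filter_le _ _)
          simp
        have hSiff : ∀ j : Fin 6, m j < x ↔ (j : ℕ) < S.card := by
          intro j
          have h := mem_iff_lt_card_of_downclosed S hdc j
          simpa [hS] using h
        have hneX : ∀ i, tt i - xk S.card ≠ 0 := by
          intro i h0
          exact hWfs S.card hcard6 i (by rw [hWval, h0, zero_mul])
        have hsgn : ∀ i, (0 < tt i - x ↔ 0 < tt i - xk S.card) := by
          intro i
          have hiff : tt i < x ↔ tt i < xk S.card := by
            rw [← hposm i, hSiff (pos i), P1 S.card hcard6 (pos i)]
          have hne1 : tt i - x ≠ 0 := hxne i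
          have hne2 : tt i - xk S.card ≠ 0 := hneX i
          rw [sub_pos, sub_pos]
          constructor
          · intro h
            rcases lt_trichotomy (tt i) (xk S.card) with h2 | h2 | h2
            · exact absurd (hiff.mpr h2) (by linarith)
            · exact absurd (by rw [h2]; ring : tt i - xk S.card = 0) hne2
            · exact h2
          · intro h
            rcases lt_trichotomy (tt i) x with h2 | h2 | h2
            · exact absurd (hiff.mp h2) (by linarith)
            · exact absurd (by rw [h2]; ring : tt i - x = 0) hne1
            · exact h2
        refine ⟨S.card, hcard6, ?_⟩
        rcases Ne.lt_or_gt ht with htneg | htpos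
        · right
          intro i
          rw [hwformula i, hWval]
          rw [(negfac t ((tt i - x) * w0 i) htneg).1]
          exact (samesign (hxne i) (hneX i) (hsgn i) (w0 i)).1
        · left
          intro i
          rw [hwformula i, hWval]
          rw [(posfac t ((tt i - x) * w0 i) htpos).1]
          exact (samesign (hxne i) (hneX i) (hsgn i) (w0 i)).2
    have hkey2 : ∃ k : Fin 6, (∀ i, (0 < (s • w0 + t • w1) i ↔ 0 < W (k : ℕ) i))
        ∨ (∀ i, (0 < (s • w0 + t • w1) i ↔ W (k : ℕ) i < 0)) := by
      obtain ⟨k, hk6, hcase⟩ := hkey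
      by_cases hk : k = 6
      · subst hk
        refine ⟨⟨0, by omega⟩, ?_⟩
        rcases hcase with hc | hc
        · right
          exact fun i => (hc i).trans (hflip i).1
        · left
          exact fun i => (hc i).trans (hflip i).2
      · exact ⟨⟨k, by omega⟩, hcase⟩
    obtain ⟨k, hcase⟩ := hkey2
    have hk6 : (k : ℕ) ≤ 6 := by omega
    rcases hcase with hc | hc
    · obtain ⟨hA', hB'⟩ := hAeq (W (k : ℕ)) hc (hWfs (k : ℕ) hk6)
      have hA'' : A = PA (k : ℕ) := hA'
      have hB'' : B = PB (k : ℕ) := hB'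
      refine ⟨k, ?_, ?_⟩
      · rw [← hPBcard, ← hB'']
        exact hB
      · rw [hA'', hB'']
    · obtain ⟨hA', hB'⟩ := hAeq2 (W (k : ℕ)) hc (hWfs (k : ℕ) hk6)
      have hA'' : A = PB (k : ℕ) := hA'
      have hB'' : B = PA (k : ℕ) := hB'
      refine ⟨k, ?_, ?_⟩
      · rw [← hPBcard, ← hA'']
        exact hA
      · rw [hA'', hB'']
        exact Sym2.eq_swap
  -- injectivity of the pair assignment
  have hpairinj : ∀ k k' : Fin 6, k < k' → f k ≠ f k' := by
    intro k k' hlt heq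
    have hk5 : (k : ℕ) < 6 := k.isLt
    have hk5' : (k' : ℕ) < 6 := k'.isLt
    have hltv : (k : ℕ) < (k' : ℕ) := hlt
    obtain ⟨istar, histar⟩ := hpossurj k
    obtain ⟨iend, hiend⟩ := hpossurj ⟨5, by omega⟩
    have hvstar : (pos istar : ℕ) = (k : ℕ) := by rw [histar]
    have hvend : (pos iend : ℕ) = 5 := by rw [hiend]
    have hs1 : 0 < tt istar - xk (k : ℕ) := by
      rw [sub_pos]
      exact (Q2 _ (by omega) istar).mpr (by omega)
    have hs2 : tt istar - xk (k' : ℕ) < 0 := by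
      rw [sub_neg]
      exact (Q1 _ (by omega) istar).mpr (by omega)
    have hs3 : 0 < tt iend - xk (k : ℕ) := by
      rw [sub_pos]
      exact (Q2 _ (by omega) iend).mpr (by omega)
    have hs4 : 0 < tt iend - xk (k' : ℕ) := by
      rw [sub_pos]
      exact (Q2 _ (by omega) iend).mpr (by omega)
    have hstar1 : istar ∈ PA (k : ℕ) ↔ istar ∈ PB (k' : ℕ) := by
      simp only [hPA, hPB, Finset.mem_filter, Finset.mem_univ, true_and]
      rw [hWval, hWval, (posfac _ (w0 istar) hs1).1, (negfac _ (w0 istar) hs2).2]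
    have hstar2 : istar ∈ PB (k : ℕ) ↔ istar ∈ PA (k' : ℕ) := by
      simp only [hPA, hPB, Finset.mem_filter, Finset.mem_univ, true_and]
      rw [hWval, hWval, (posfac _ (w0 istar) hs1).2, (negfac _ (w0 istar) hs2).1]
    have hend1 : iend ∈ PA (k : ℕ) ↔ iend ∈ PA (k' : ℕ) := by
      simp only [hPA, Finset.mem_filter, Finset.mem_univ, true_and]
      rw [hWval, hWval, (posfac _ (w0 iend) hs3).1, (posfac _ (w0 iend) hs4).1]
    have hend2 : iend ∈ PB (k : ℕ) ↔ iend ∈ PB (k' : ℕ) := by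
      simp only [hPB, Finset.mem_filter, Finset.mem_univ, true_and]
      rw [hWval, hWval, (posfac _ (w0 iend) hs3).2, (posfac _ (w0 iend) hs4).2]
    simp only [hf] at heq
    rw [Sym2.eq_iff] at heq
    rcases heq with ⟨hA, hB⟩ | ⟨hA, hB⟩
    · rcases htotalP (k : ℕ) (by omega) istar with h | h
      · have h1 : istar ∈ PB (k' : ℕ) := hstar1.mp h
        have h2 : istar ∈ PA (k' : ℕ) := by rw [← hA]; exact h
        exact (Finset.disjoint_left.mp (hdisjP _) h2) h1
      · have h1 : istar ∈ PA (k' : ℕ) := hstar2.mp h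
        have h2 : istar ∈ PB (k' : ℕ) := by rw [← hB]; exact h
        exact (Finset.disjoint_left.mp (hdisjP _) h1) h2
    · rcases htotalP (k : ℕ) (by omega) iend with h | h
      · have h1 : iend ∈ PA (k' : ℕ) := hend1.mp h
        have h2 : iend ∈ PB (k' : ℕ) := by rw [← hA]; exact h
        exact (Finset.disjoint_left.mp (hdisjP _) h1) h2
      · have h1 : iend ∈ PB (k' : ℕ) := hend2.mp h
        have h2 : iend ∈ PA (k' : ℕ) := by rw [← hB]; exact h
        exact (Finset.disjoint_left.mp (hdisjP _) h2) h1
  -- the crossing set equals the image of K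
  have hXeq : {q : Sym2 (Finset (Fin 6)) | ∃ A B : Finset (Fin 6), q = s(A, B) ∧
      A.card = 3 ∧ B.card = 3 ∧ Disjoint A B ∧
      (intrinsicInterior ℝ (convexHull ℝ (p '' A)) ∩
       intrinsicInterior ℝ (convexHull ℝ (p '' B))).Nonempty} = ↑(K.image f) := by
    ext q
    simp only [Set.mem_setOf_eq, Finset.coe_image, Set.mem_image, Finset.mem_coe]
    constructor
    · rintro ⟨A, B, rfl, hA, hB, hAB, hne⟩
      obtain ⟨w, hwdep, hwA, hwB⟩ := (cross_iff hgen hA hB hAB).mp hne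
      obtain ⟨k, hNk, hqk⟩ := hmatch w A B hwdep hA hB hAB hwA hwB
      refine ⟨k, ?_, hqk.symm⟩
      simp only [hK, Finset.mem_filter, Finset.mem_univ, true_and]
      exact hNk
    · rintro ⟨k, hkK, rfl⟩
      have hNk : N (k : ℕ) = 3 := by
        have h := hkK
        simp only [hK, Finset.mem_filter, Finset.mem_univ, true_and] at h
        exact h
      have hk6 : (k : ℕ) ≤ 6 := by omega
      have hc := hPAcard (k : ℕ) hk6
      have hA3 : (PA (k : ℕ)).card = 3 := by omega
      have hB3 : (PB (k : ℕ)).card = 3 := by rw [hPBcard]; exact hNk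
      refine ⟨PA (k : ℕ), PB (k : ℕ), by simp [hf], hA3, hB3, hdisjP _, ?_⟩
      rw [cross_iff hgen hA3 hB3 (hdisjP _)]
      refine ⟨W (k : ℕ), hWdep _, ?_, ?_⟩
      · intro i hi
        simp only [hPA, Finset.mem_filter, Finset.mem_univ, true_and] at hi
        exact hi
      · intro i hi
        simp only [hPB, Finset.mem_filter, Finset.mem_univ, true_and] at hi
        exact hi
  rw [hXeq, Set.ncard_coe_finset]
  rw [Finset.card_image_of_injOn (by
    intro a ha b hb hab
    by_contra hne
    rcases lt_or_gt_of_ne hne with h | h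
    · exact hpairinj a b h hab
    · exact hpairinj b a h hab.symm)]
  rw [hK]
  exact count3 halt


end
end
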